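/- arXiv:2211.16747 — 6 statements merged into one kernel-verified Lean document; each statement's English description precedes it below -/
import Mathlib

section
/- Let G=(V,E) be a connected finite graph with positive edge costs, let α ≥ 1, and let (U, V∖U) be an α-approximate minimum cut of G. Then there exist subsets S, T ⊆ V with |S| ≤ ⌊2α⌋+1 and |T| ≤ ⌊2α⌋+1 such that (U, V∖U) is the unique minimum (S,T)-terminal cut of G. -/
open Finset

variable {V : Type*} [Fintype V] [DecidableEq V]

/- The value of the cut `(U, Uᶜ)`: total cost of edges with exactly one endpoint in `U`. -/
open Classical in
noncomputable def cutVal (G : SimpleGraph V) (c : V → V → ℝ) (U : Finset V) : ℝ :=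
  ∑ u ∈ U, ∑ v ∈ Uᶜ, if G.Adj u v then c u v else 0

/-- `(X, Xᶜ)` is an `(S,T)`-terminal cut: `S ⊆ X ⊆ Tᶜ`. -/
def IsTerminalCut (S T X : Finset V) : Prop := S ⊆ X ∧ X ⊆ Tᶜ

/-- `(X, Xᶜ)` is a minimum `(S,T)`-terminal cut. -/
def IsMinTerminalCut (G : SimpleGraph V) (c : V → V → ℝ) (S T X : Finset V) : Prop :=
  IsTerminalCut S T X ∧ ∀ Y : Finset V, IsTerminalCut S T Y → cutVal G c X ≤ cutVal G c Y

/-- `(X, Xᶜ)` is the unique minimum `(S,T)`-terminal cut. -/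
def IsUniqueMinTerminalCut (G : SimpleGraph V) (c : V → V → ℝ) (S T X : Finset V) : Prop :=
  IsMinTerminalCut G c S T X ∧ ∀ Y : Finset V, IsMinTerminalCut G c S T Y → Y = X

/-!
Take a smallest `S ⊆ U` such that `U` is the unique minimiser of the cut function `d` among
the sets between `S` and `U`, and likewise `T ⊆ Uᶜ`; submodularity then makes `(U, Uᶜ)` the
unique minimum `(S,T)`-terminal cut.

To bound `k = #S`, note that by minimality every `s ∈ S` has a competitor `Z s`, with
`S \ {s} ⊆ Z s ⊆ U \ {s}` and `d(Z s) ≤ d(U)`. Uncrossing the `Z s` edge by edge bounds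
`∑ s, d(Z s) ≤ k d(U)` from below by the cuts of the `k` sets of vertices missed by exactly
one `Z s` (each at least `λ`) plus those of the `k - 2` level sets "missed by fewer than `j`
of the `Z s`", `3 ≤ j ≤ k`, which lie between `S` and `U` (each at least `d(U)`). Hence
`k λ ≤ 2 d(U) ≤ 2 α λ`.
-/

section CutFunction

variable (f : V → V → ℝ)

noncomputable def cut (X : Finset V) : ℝ := ∑ u ∈ X, ∑ v ∈ Xᶜ, f u v

variable {f}

lemma cut_nonneg (hf : ∀ u v, 0 ≤ f u v) (X : Finset V) : 0 ≤ cut f X :=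
  sum_nonneg fun u _ => sum_nonneg fun v _ => hf u v

lemma cut_eq_sum_ite (X : Finset V) :
    cut f X = ∑ u, ∑ v, if u ∈ X ∧ v ∉ X then f u v else 0 := by
  simp only [cut, ite_and, ← mem_compl, sum_ite_irrel, sum_const_zero, sum_ite_mem, univ_inter]

lemma two_mul_cut (hfs : ∀ u v, f u v = f v u) (X : Finset V) :
    2 * cut f X = ∑ u, ∑ v, if Xor (u ∈ X) (v ∈ X) then f u v else 0 := by
  have hswap : cut f X = ∑ u, ∑ v, if v ∈ X ∧ u ∉ X then f u v else 0 := by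
    rw [cut_eq_sum_ite, sum_comm]
    simp only [hfs]
  rw [two_mul]
  nth_rw 1 [cut_eq_sum_ite]
  rw [hswap, ← sum_add_distrib]
  refine sum_congr rfl fun u _ => ?_
  rw [← sum_add_distrib]
  refine sum_congr rfl fun v _ => ?_
  by_cases hu : u ∈ X <;> by_cases hv : v ∈ X <;> simp [hu, hv]

lemma cut_compl (hfs : ∀ u v, f u v = f v u) (X : Finset V) : cut f Xᶜ = cut f X := by
  have h := two_mul_cut hfs Xᶜ
  simp only [mem_compl, xor_not_not, ← two_mul_cut hfs X] at h
  linarith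

lemma cut_inter_add_cut_union_le (hf : ∀ u v, 0 ≤ f u v) (X Y : Finset V) :
    cut f (X ∩ Y) + cut f (X ∪ Y) ≤ cut f X + cut f Y := by
  simp only [cut_eq_sum_ite, ← sum_add_distrib]
  refine sum_le_sum fun u _ => sum_le_sum fun v _ => ?_
  have := hf u v
  by_cases hux : u ∈ X <;> by_cases huy : u ∈ Y <;> by_cases hvx : v ∈ X <;>
    by_cases hvy : v ∈ Y <;> simp [hux, huy, hvx, hvy] <;> linarith

lemma two_mul_sum_cut {ι : Type*} (hfs : ∀ u v, f u v = f v u) (I : Finset ι)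
    (X : ι → Finset V) :
    2 * ∑ i ∈ I, cut f (X i) = ∑ u, ∑ v, #{i ∈ I | Xor (u ∈ X i) (v ∈ X i)} * f u v := by
  simp only [mul_sum, two_mul_cut hfs]
  rw [sum_comm]
  refine sum_congr rfl fun u _ => ?_
  rw [sum_comm]
  refine sum_congr rfl fun v _ => ?_
  rw [← sum_filter, sum_const, nsmul_eq_mul]

lemma sum_cut_le_sum_cut {ι κ : Type*} (hf : ∀ u v, 0 ≤ f u v) (hfs : ∀ u v, f u v = f v u)
    {I : Finset ι} {J : Finset κ} {X : ι → Finset V} {Y : κ → Finset V}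
    (hcount : ∀ u v, #{i ∈ I | Xor (u ∈ X i) (v ∈ X i)} ≤ #{j ∈ J | Xor (u ∈ Y j) (v ∈ Y j)}) :
    ∑ i ∈ I, cut f (X i) ≤ ∑ j ∈ J, cut f (Y j) := by
  suffices 2 * ∑ i ∈ I, cut f (X i) ≤ 2 * ∑ j ∈ J, cut f (Y j) by linarith
  rw [two_mul_sum_cut hfs, two_mul_sum_cut hfs]
  refine sum_le_sum fun u _ => sum_le_sum fun v _ => ?_
  exact mul_le_mul_of_nonneg_right (by exact_mod_cast hcount u v) (hf u v)

end CutFunction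

section Counting

variable {β : Type*} [DecidableEq β]

lemma card_filter_eq_singleton_le (S P : Finset β) :
    #{s ∈ S | P = {s}} ≤ if #P = 1 then 1 else 0 := by
  split_ifs with hP
  · refine hP ▸ card_le_card fun s hs => ?_
    rw [(mem_filter.mp hs).2]
    exact mem_singleton_self s
  · simp only [nonpos_iff_eq_zero, card_eq_zero, filter_eq_empty_iff]
    rintro s - rfl
    exact hP (card_singleton s)

lemma card_filter_xor_mem_add_two_mul_card_inter (S P Q : Finset β) (hP : P ⊆ S) (hQ : Q ⊆ S) :
    #{s ∈ S | Xor (s ∈ P) (s ∈ Q)} + 2 * #(P ∩ Q) = #P + #Q := by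
  have hsplit : {s ∈ S | Xor (s ∈ P) (s ∈ Q)} = P \ Q ∪ Q \ P := by
    ext s
    simp only [mem_filter, mem_union, mem_sdiff, xor_def]
    constructor
    · exact fun h => h.2
    · rintro (h | h)
      exacts [⟨hP h.1, .inl h⟩, ⟨hQ h.1, .inr h⟩]
  have hP' := card_sdiff_add_card_inter P Q
  have hQ' := card_sdiff_add_card_inter Q P
  rw [inter_comm] at hQ'
  rw [hsplit, card_union_of_disjoint disjoint_sdiff_sdiff]
  omega

/-- Edgewise form of `sum_cut_profile_le`: `P` and `Q` are the profiles of the two endpoints. -/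
lemma card_filter_xor_singleton_add_card_filter_xor_card_le {S P Q : Finset β}
    (hP : P ⊆ S) (hQ : Q ⊆ S) (k : ℕ) :
    #{s ∈ S | Xor (P = {s}) (Q = {s})} + #{j ∈ Icc 3 k | Xor (#P < j) (#Q < j)}
      ≤ #{s ∈ S | Xor (s ∈ P) (s ∈ Q)} := by
  wlog hPQ : #P ≤ #Q generalizing P Q
  · simpa only [xor_comm] using this hQ hP (by omega)
  by_cases hPeqQ : P = Q
  · simp [hPeqQ]
  have hcard := card_filter_xor_mem_add_two_mul_card_inter S P Q hP hQ
  have hinter : ¬(#(P ∩ Q) = #P ∧ #(P ∩ Q) = #Q) := fun h => hPeqQ <|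
    (eq_of_subset_of_card_le inter_subset_left h.1.ge).symm.trans
      (eq_of_subset_of_card_le inter_subset_right h.2.ge)
  have hleP := card_le_card (inter_subset_left : P ∩ Q ⊆ P)
  have hleQ := card_le_card (inter_subset_right : P ∩ Q ⊆ Q)
  have hsingle : #{s ∈ S | Xor (P = {s}) (Q = {s})}
      ≤ (if #P = 1 then 1 else 0) + (if #Q = 1 then 1 else 0) := by
    refine (card_le_card fun s hs => ?_).trans ((card_union_le _ _).trans
      (add_le_add (card_filter_eq_singleton_le S P) (card_filter_eq_singleton_le S Q)))
    simp only [mem_filter, xor_def] at hs ⊢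
    rw [mem_union, mem_filter, mem_filter]
    tauto
  have hlevel : #{j ∈ Icc 3 k | Xor (#P < j) (#Q < j)} ≤ #Q - max #P 2 := by
    refine (card_le_card fun j hj => ?_).trans (Nat.card_Ioc _ _).le
    simp only [mem_filter, mem_Icc, xor_def, mem_Ioc] at hj ⊢
    omega
  split_ifs at hsingle <;> omega

end Counting

section Uncrossing

variable {ι : Type*}

lemma card_filter_disjSum {κ : Type*} (I : Finset ι) (J : Finset κ) (p : ι ⊕ κ → Prop)
    [DecidablePred p] :
    #{x ∈ I.disjSum J | p x} = #{i ∈ I | p (.inl i)} + #{j ∈ J | p (.inr j)} := by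
  simp only [card_filter, sum_disjSum]

variable [DecidableEq ι]

def profile (S : Finset ι) (Z : ι → Finset V) (w : V) : Finset ι := {s ∈ S | w ∉ Z s}

lemma sum_cut_profile_le {f : V → V → ℝ} (hf : ∀ u v, 0 ≤ f u v) (hfs : ∀ u v, f u v = f v u)
    (S : Finset ι) (Z : ι → Finset V) :
    ∑ s ∈ S, cut f {w | profile S Z w = {s}} + ∑ j ∈ Icc 3 #S, cut f {w | #(profile S Z w) < j}
      ≤ ∑ s ∈ S, cut f (Z s) := by
  let N (s : ι) : Finset V := {w | profile S Z w = {s}}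
  let L (j : ℕ) : Finset V := {w | #(profile S Z w) < j}
  refine (sum_disjSum S (Icc 3 #S) fun x => cut f (Sum.elim N L x)).symm.trans_le
    (sum_cut_le_sum_cut hf hfs fun u v => ?_)
  rw [card_filter_disjSum]
  have hmem : ∀ s ∈ S, Xor (u ∈ Z s) (v ∈ Z s) ↔ Xor (s ∈ profile S Z u) (s ∈ profile S Z v) :=
    fun s hs => by simp only [profile, mem_filter, hs, true_and, xor_not_not]
  rw [filter_congr hmem]
  simp only [N, L, Sum.elim_inl, Sum.elim_inr, mem_filter, mem_univ, true_and]
  exact card_filter_xor_singleton_add_card_filter_xor_card_le (filter_subset _ S)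
    (filter_subset _ S) #S

omit [Fintype V] in
lemma profile_eq_singleton {S : Finset V} {Z : V → Finset V} {s : V} (hs : s ∈ S)
    (hZ : ∀ t ∈ S, s ∈ Z t ↔ s ≠ t) : profile S Z s = {s} := by
  ext t
  simp only [profile, mem_filter, mem_singleton]
  constructor
  · rintro ⟨ht, hsZ⟩
    by_contra hts
    exact hsZ ((hZ t ht).mpr (Ne.symm hts))
  · rintro rfl
    exact ⟨hs, fun hsZ => (hZ _ hs).mp hsZ rfl⟩

end Uncrossing

section UniqueMinCutBetween

variable {f : V → V → ℝ}

variable (f) in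
def IsUniqueMinCutBetween (S A : Finset V) : Prop :=
  S ⊆ A ∧ ∀ L, S ⊆ L → L ⊆ A → L ≠ A → cut f A < cut f L

lemma isUniqueMinCutBetween_self (A : Finset V) : IsUniqueMinCutBetween f A A :=
  ⟨subset_rfl, fun _ hAL hLA hne => absurd (hLA.antisymm hAL) hne⟩

namespace IsUniqueMinCutBetween

variable {S A : Finset V}

lemma cut_le (hS : IsUniqueMinCutBetween f S A) {L : Finset V} (hSL : S ⊆ L) (hLA : L ⊆ A) :
    cut f A ≤ cut f L := by
  obtain rfl | hne := eq_or_ne L A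
  · exact le_rfl
  · exact (hS.2 L hSL hLA hne).le

lemma nonempty (hf : ∀ u v, 0 ≤ f u v) (hS : IsUniqueMinCutBetween f S A) (hA : A.Nonempty) :
    S.Nonempty := by
  rw [nonempty_iff_ne_empty]
  rintro rfl
  have := hS.2 ∅ subset_rfl (empty_subset A) hA.ne_empty.symm
  simp only [cut, sum_empty] at this
  exact this.not_ge (cut_nonneg hf A)

lemma exists_competitor (hS : IsUniqueMinCutBetween f S A)
    (hmin : ∀ S', IsUniqueMinCutBetween f S' A → #S ≤ #S') {s : V} (hs : s ∈ S) :
    ∃ Z ⊆ A, cut f Z ≤ cut f A ∧ ∀ t ∈ S, t ∈ Z ↔ t ≠ s := by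
  have herase : ¬IsUniqueMinCutBetween f (S.erase s) A := fun h =>
    (hmin _ h).not_gt (card_erase_lt_of_mem hs)
  simp only [IsUniqueMinCutBetween, (erase_subset s S).trans hS.1, true_and, not_forall,
    not_lt] at herase
  obtain ⟨Z, hSZ, hZA, hZne, hZcut⟩ := herase
  have hsZ : s ∉ Z := fun hsZ =>
    (hS.2 Z (insert_erase hs ▸ insert_subset hsZ hSZ) hZA hZne).not_ge hZcut
  refine ⟨Z, hZA, hZcut, fun t ht => ⟨?_, fun hts => hSZ (mem_erase.mpr ⟨hts, ht⟩)⟩⟩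
  rintro htZ rfl
  exact hsZ htZ

lemma cut_lt_of_isTerminalCut (hf : ∀ u v, 0 ≤ f u v) (hfs : ∀ u v, f u v = f v u)
    {S T U X : Finset V} (hS : IsUniqueMinCutBetween f S U)
    (hT : IsUniqueMinCutBetween f T Uᶜ) (hX : IsTerminalCut S T X) (hXU : X ≠ U) :
    cut f U < cut f X := by
  have hTX : T ⊆ (X ∪ U)ᶜ := by
    rw [compl_union]
    exact subset_inter (subset_compl_comm.mp hX.2) hT.1
  have hinter : cut f U ≤ cut f (X ∩ U) := hS.cut_le (subset_inter hX.1 hS.1) inter_subset_right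
  have hunion : cut f U ≤ cut f (X ∪ U) := by
    rw [← cut_compl hfs (X ∪ U), ← cut_compl hfs U]
    exact hT.cut_le hTX (compl_subset_compl.mpr subset_union_right)
  have hstrict : cut f U < cut f (X ∩ U) ∨ cut f U < cut f (X ∪ U) := by
    by_cases hinterU : X ∩ U = U
    · right
      rw [← cut_compl hfs (X ∪ U), ← cut_compl hfs U]
      refine hT.2 _ hTX (compl_subset_compl.mpr subset_union_right) fun h => hXU ?_
      rw [compl_inj_iff, union_eq_right] at h
      exact h.antisymm (inter_eq_right.mp hinterU)
    · exact .inl (hS.2 _ (subset_inter hX.1 hS.1) inter_subset_right hinterU)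
  have := cut_inter_add_cut_union_le hf X U
  rcases hstrict with h | h <;> linarith

lemma card_mul_le_two_mul_cut (hf : ∀ u v, 0 ≤ f u v)
    (hfs : ∀ u v, f u v = f v u) (hS : IsUniqueMinCutBetween f S A)
    (hmin : ∀ S', IsUniqueMinCutBetween f S' A → #S ≤ #S') (hA : A ≠ univ) {lam : ℝ}
    (hlam : ∀ W : Finset V, W.Nonempty → W ≠ univ → lam ≤ cut f W) :
    #S * lam ≤ 2 * cut f A := by
  have hcutA := cut_nonneg hf A
  by_cases hk : #S < 2
  · obtain hS0 | hS1 : #S = 0 ∨ #S = 1 := by omega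
    · simp [hS0, hcutA]
    · have := hlam A ((card_pos.mp (by omega)).mono hS.1) hA
      simp only [hS1, Nat.cast_one, one_mul]
      linarith
  choose! Z hZA hZcut hZmem using fun s (hs : s ∈ S) => hS.exists_competitor hmin hs
  have hprofile_mem : ∀ s ∈ S, profile S Z s = {s} := fun s hs =>
    profile_eq_singleton hs fun t ht => hZmem t ht s hs
  have hprofile_out : ∀ w ∉ A, profile S Z w = S := fun w hw =>
    filter_true_of_mem fun s hs hwZ => hw (hZA s hs hwZ)
  obtain ⟨w, hw⟩ : ∃ w, w ∉ A := by simpa [eq_univ_iff_forall] using hA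
  have hN : ∀ s ∈ S, lam ≤ cut f {w | profile S Z w = {s}} := fun s hs => by
    refine hlam _ ⟨s, by simp [hprofile_mem s hs]⟩ fun huniv => ?_
    have : w ∈ ({w | profile S Z w = {s}} : Finset V) := by
      rw [huniv]; exact mem_univ w
    rw [mem_filter, hprofile_out w hw] at this
    simp [this.2] at hk
  have hL : ∀ j ∈ Icc 3 #S, cut f A ≤ cut f {w | #(profile S Z w) < j} := fun j hj => by
    rw [mem_Icc] at hj
    refine hS.cut_le (fun s hs => ?_) fun w hwL => ?_
    · simp only [mem_filter, mem_univ, true_and, hprofile_mem s hs, card_singleton]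
      omega
    · by_contra hwA
      simp only [mem_filter, mem_univ, true_and, hprofile_out w hwA] at hwL
      omega
  have hsumN := card_nsmul_le_sum S _ _ hN
  have hsumL := card_nsmul_le_sum (Icc 3 #S) _ _ hL
  have hsumZ := sum_le_card_nsmul S _ _ hZcut
  have hcardL : ((#(Icc 3 #S) : ℕ) : ℝ) = #S - 2 := by
    rw [Nat.card_Icc, Nat.cast_sub (by omega)]
    push_cast
    ring
  simp only [nsmul_eq_mul, hcardL] at hsumN hsumL hsumZ
  linarith [sum_cut_profile_le hf hfs S Z]

end IsUniqueMinCutBetween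

lemma exists_isUniqueMinCutBetween (hf : ∀ u v, 0 ≤ f u v) (hfs : ∀ u v, f u v = f v u)
    {A : Finset V} (hAne : A.Nonempty) (hA : A ≠ univ) {lam : ℝ}
    (hlam : ∀ W : Finset V, W.Nonempty → W ≠ univ → lam ≤ cut f W) :
    ∃ S, IsUniqueMinCutBetween f S A ∧ S.Nonempty ∧ #S * lam ≤ 2 * cut f A := by
  classical
  obtain ⟨S, hS, hmin⟩ := exists_min_image {S | IsUniqueMinCutBetween f S A} card
    ⟨A, mem_filter.mpr ⟨mem_univ A, isUniqueMinCutBetween_self A⟩⟩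
  replace hS := (mem_filter.mp hS).2
  exact ⟨S, hS, hS.nonempty hf hAne, hS.card_mul_le_two_mul_cut hf hfs
    (fun S' hS' => hmin S' (mem_filter.mpr ⟨mem_univ S', hS'⟩)) hA hlam⟩

end UniqueMinCutBetween

section Graph

variable {G : SimpleGraph V} {c : V → V → ℝ}

omit [Fintype V] [DecidableEq V] in
variable (G c) in
open Classical in
noncomputable def adjWeight (u v : V) : ℝ := if G.Adj u v then c u v else 0

lemma cutVal_eq_cut (X : Finset V) : cutVal G c X = cut (adjWeight G c) X := rfl

omit [Fintype V] [DecidableEq V] in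
lemma adjWeight_nonneg (hc : ∀ u v, G.Adj u v → 0 ≤ c u v) (u v : V) : 0 ≤ adjWeight G c u v := by
  unfold adjWeight
  split_ifs with h
  exacts [hc u v h, le_rfl]

omit [Fintype V] [DecidableEq V] in
lemma adjWeight_symm (hcsymm : ∀ u v, c u v = c v u) (u v : V) :
    adjWeight G c u v = adjWeight G c v u := by
  unfold adjWeight
  rw [G.adj_comm, hcsymm]

lemma cutVal_pos (hG : G.Connected) (hc : ∀ u v, G.Adj u v → 0 < c u v) {W : Finset V}
    (hWne : W.Nonempty) (hW : W ≠ univ) : 0 < cutVal G c W := by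
  obtain ⟨u, hu⟩ := hWne
  obtain ⟨v, hv⟩ : ∃ v, v ∉ W := by simpa [eq_univ_iff_forall] using hW
  obtain ⟨d, -, hd₁, hd₂⟩ := (hG.preconnected u v).some.exists_boundary_dart (W : Set V) hu hv
  have hf := adjWeight_nonneg fun u v h => (hc u v h).le
  have hpos : 0 < adjWeight G c d.fst d.snd := by simpa [adjWeight, d.adj] using hc _ _ d.adj
  refine hpos.trans_le ((single_le_sum (fun v _ => hf d.fst v) (mem_compl.mpr hd₂)).trans ?_)
  exact single_le_sum (f := fun u => ∑ v ∈ Wᶜ, adjWeight G c u v)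
    (fun u _ => sum_nonneg fun v _ => hf u v) hd₁

lemma isUniqueMinTerminalCut_of_forall_lt {S T U : Finset V} (hU : IsTerminalCut S T U)
    (h : ∀ X, IsTerminalCut S T X → X ≠ U → cutVal G c U < cutVal G c X) :
    IsUniqueMinTerminalCut G c S T U := by
  refine ⟨⟨hU, fun X hX => ?_⟩, fun X hX => ?_⟩
  · obtain rfl | hne := eq_or_ne X U
    exacts [le_rfl, (h X hX hne).le]
  · by_contra hne
    exact (h X hX.1 hne).not_ge (hX.2 U hU)

end Graph

theorem approx_min_cut_unique_ST_terminal_cut_general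
    (G : SimpleGraph V) (hG : G.Connected)
    (c : V → V → ℝ) (hc : ∀ u v, G.Adj u v → 0 < c u v) (hcsymm : ∀ u v, c u v = c v u)
    (α : ℝ) (lam : ℝ)
    (hlam : IsLeast {x : ℝ | ∃ W : Finset V, W.Nonempty ∧ W ≠ Finset.univ ∧ cutVal G c W = x} lam)
    (U : Finset V) (hUne : U.Nonempty) (hUp : U ≠ Finset.univ)
    (happrox : cutVal G c U ≤ α * lam) :
    ∃ S T : Finset V, S.Nonempty ∧ T.Nonempty ∧
      S.card ≤ ⌊2 * α⌋₊ + 1 ∧ T.card ≤ ⌊2 * α⌋₊ + 1 ∧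
      IsUniqueMinTerminalCut G c S T U := by
  have hf := adjWeight_nonneg fun u v h => (hc u v h).le
  have hfs := adjWeight_symm (G := G) hcsymm
  have hlam_pos : 0 < lam := by
    obtain ⟨W, hWne, hW, rfl⟩ := hlam.1
    exact cutVal_pos hG hc hWne hW
  have hlow : ∀ W : Finset V, W.Nonempty → W ≠ univ → lam ≤ cut (adjWeight G c) W :=
    fun W hWne hW => hlam.2 ⟨W, hWne, hW, rfl⟩
  obtain ⟨S, hS, hSne, hScard⟩ := exists_isUniqueMinCutBetween hf hfs hUne hUp hlow
  obtain ⟨T, hT, hTne, hTcard⟩ := exists_isUniqueMinCutBetween hf hfs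
    (by rwa [← compl_ne_univ_iff_nonempty, compl_compl]) ((compl_ne_univ_iff_nonempty U).mpr hUne)
    hlow
  rw [cut_compl hfs] at hTcard
  rw [cutVal_eq_cut] at happrox
  have hcard : ∀ n : ℕ, n * lam ≤ 2 * cut (adjWeight G c) U → n ≤ ⌊2 * α⌋₊ + 1 := fun n hn =>
    (Nat.le_floor (le_of_mul_le_mul_right (by linarith) hlam_pos)).trans (Nat.le_succ _)
  refine ⟨S, T, hSne, hTne, hcard _ hScard, hcard _ hTcard,
    isUniqueMinTerminalCut_of_forall_lt ⟨hS.1, subset_compl_comm.mp hT.1⟩ fun X hX hXU => ?_⟩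
  exact hS.cut_lt_of_isTerminalCut hf hfs hT hX hXU

/-- Every α-approximate minimum cut of a connected graph is the unique minimum
(S,T)-terminal cut for some S, T of size at most ⌊2α⌋+1. -/
theorem approx_min_cut_unique_ST_terminal_cut
    (G : SimpleGraph V) (hG : G.Connected)
    (c : V → V → ℝ) (hc : ∀ u v, G.Adj u v → 0 < c u v) (hcsymm : ∀ u v, c u v = c v u)
    (α : ℝ) (hα : 1 ≤ α) (lam : ℝ)
    (hlam : IsLeast {x : ℝ | ∃ W : Finset V, W.Nonempty ∧ W ≠ Finset.univ ∧ cutVal G c W = x} lam)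
    (U : Finset V) (hUne : U.Nonempty) (hUp : U ≠ Finset.univ)
    (happrox : cutVal G c U ≤ α * lam) :
    ∃ S T : Finset V, S.Nonempty ∧ T.Nonempty ∧
      S.card ≤ ⌊2 * α⌋₊ + 1 ∧ T.card ≤ ⌊2 * α⌋₊ + 1 ∧
      IsUniqueMinTerminalCut G c S T U :=
  approx_min_cut_unique_ST_terminal_cut_general G hG c hc hcsymm α lam hlam U hUne hUp happrox
end

section
/- Let G=(V,E) be a finite graph with positive edge costs, let U be a nonempty proper subset of V, let 𝒞 := {Q ⊊ V : V∖U ⊊ Q and d(Q) ≤ d(U)}, and suppose 𝒞 is nonempty. Let S ⊆ U be a minimal transversal of 𝒞, i.e., a subset of U that intersects every member of 𝒞 and such that no proper subset of S intersects every member of 𝒞. Then (U, V∖U) is the unique minimum (S, V∖U)-terminal cut of G. -/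
open Finset

variable {V : Type*} [Fintype V] [DecidableEq V]

lemma cutVal_compl (G : SimpleGraph V) (c : V → V → ℝ) (hcsymm : ∀ u v, c u v = c v u)
    (X : Finset V) : cutVal G c Xᶜ = cutVal G c X := by
  unfold cutVal
  rw [compl_compl, Finset.sum_comm]
  refine Finset.sum_congr rfl fun u _ => Finset.sum_congr rfl fun v _ => ?_
  rw [hcsymm, G.adj_comm]

/-- If S ⊆ U is a minimal transversal of the nonempty collection
𝒞 = {Q ⊊ V : Uᶜ ⊊ Q, d(Q) ≤ d(U)}, then (U, Uᶜ) is the unique minimum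
(S, Uᶜ)-terminal cut. -/
theorem minimal_transversal_unique_min_terminal_cut
    (G : SimpleGraph V)
    (c : V → V → ℝ) (hc : ∀ u v, G.Adj u v → 0 < c u v) (hcsymm : ∀ u v, c u v = c v u)
    (U : Finset V) (hUne : U.Nonempty) (hUp : U ≠ Finset.univ)
    (hCne : ∃ Q : Finset V, Uᶜ ⊂ Q ∧ Q ≠ Finset.univ ∧ cutVal G c Q ≤ cutVal G c U)
    (S : Finset V) (hSU : S ⊆ U)
    (htrans : ∀ Q : Finset V, Uᶜ ⊂ Q → Q ≠ Finset.univ → cutVal G c Q ≤ cutVal G c U →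
      (S ∩ Q).Nonempty)
    (hminimal : ∀ S' : Finset V, S' ⊂ S →
      ∃ Q : Finset V, Uᶜ ⊂ Q ∧ Q ≠ Finset.univ ∧ cutVal G c Q ≤ cutVal G c U ∧ S' ∩ Q = ∅) :
    IsUniqueMinTerminalCut G c S Uᶜ U := by
  classical
  obtain ⟨Q0, hQ1, hQ2, hQ3⟩ := hCne
  have hSne : S.Nonempty := by
    obtain ⟨x, hx⟩ := htrans Q0 hQ1 hQ2 hQ3
    exact ⟨x, (Finset.mem_inter.mp hx).1⟩
  have key : ∀ X : Finset V, S ⊆ X → X ⊆ U → X ≠ U → cutVal G c U < cutVal G c X := by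
    intro X hSX hXU hXne
    by_contra h
    push_neg at h
    have hQ : Uᶜ ⊂ Xᶜ := by
      rw [Finset.compl_ssubset_compl]
      exact ssubset_of_subset_of_ne hXU hXne
    have hQuniv : Xᶜ ≠ Finset.univ := by
      intro h'
      obtain ⟨s, hs⟩ := hSne
      have : s ∈ Xᶜ := h' ▸ Finset.mem_univ s
      exact (Finset.mem_compl.mp this) (hSX hs)
    obtain ⟨s, hs⟩ := htrans Xᶜ hQ hQuniv (by rwa [cutVal_compl G c hcsymm])
    rw [Finset.mem_inter, Finset.mem_compl] at hs
    exact hs.2 (hSX hs.1)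
  refine ⟨⟨⟨hSU, by simp⟩, ?_⟩, ?_⟩
  · intro Y hY
    rcases eq_or_ne Y U with rfl | hne
    · exact le_refl _
    · exact le_of_lt (key Y hY.1 (by simpa using hY.2) hne)
  · intro Y hY
    by_contra hne
    have h1 := hY.2 U ⟨hSU, by simp⟩
    have h2 := key Y hY.1.1 (by simpa using hY.1.2) hne
    linarith
end

section
/- Let G=(V,E) be a connected finite graph with positive edge costs, let α ≥ 1, and let (U, V∖U) be an α-approximate minimum cut of G. Let 𝒞 := {Q ⊊ V : V∖U ⊊ Q and d(Q) ≤ d(U)}, suppose 𝒞 is nonempty, and let S ⊆ U be a minimal transversal of 𝒞, i.e., a subset of U that intersects every member of 𝒞 and such that no proper subset of S intersects every member of 𝒞. Then |S| ≤ ⌊2α⌋+1. -/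
open Finset

variable {V : Type*} [Fintype V] [DecidableEq V]

section MTAux

set_option linter.unusedSectionVars false

open Classical in
/-- Edge weight function: the cost on adjacent pairs, `0` otherwise. -/
noncomputable def MTwt (G : SimpleGraph V) (c : V → V → ℝ) (u v : V) : ℝ :=
  if G.Adj u v then c u v else 0

open Classical in
/-- Indicator that the pair `(u,v)` is separated by the set `A`. -/
noncomputable def MTsig (A : Finset V) (u v : V) : ℝ :=
  if ((u ∈ A) ↔ (v ∈ A)) then 0 else 1

lemma MTcutVal_eq (G : SimpleGraph V) (c : V → V → ℝ) (A : Finset V) :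
    cutVal G c A = ∑ u ∈ A, ∑ v ∈ Aᶜ, MTwt G c u v := rfl

lemma MTwt_nonneg (G : SimpleGraph V) (c : V → V → ℝ) (hc : ∀ u v, G.Adj u v → 0 < c u v)
    (u v : V) : 0 ≤ MTwt G c u v := by
  unfold MTwt; split
  · exact le_of_lt (hc u v (by assumption))
  · exact le_refl 0

lemma MTwt_symm (G : SimpleGraph V) (c : V → V → ℝ) (hcs : ∀ u v, c u v = c v u)
    (u v : V) : MTwt G c u v = MTwt G c v u := by
  unfold MTwt
  by_cases h : G.Adj u v
  · rw [if_pos h, if_pos h.symm, hcs]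
  · rw [if_neg h, if_neg (fun hh => h hh.symm)]

lemma MTsig_symm (A : Finset V) (u v : V) : MTsig A u v = MTsig A v u := by
  unfold MTsig
  by_cases h : (u ∈ A) ↔ (v ∈ A)
  · rw [if_pos h, if_pos (Iff.comm.mp h)]
  · rw [if_neg h, if_neg (fun hh => h (Iff.comm.mp hh))]

lemma MTsig_compl (A : Finset V) (u v : V) : MTsig Aᶜ u v = MTsig A u v := by
  unfold MTsig
  by_cases h : (u ∈ A) ↔ (v ∈ A)
  · rw [if_pos h, if_pos (by simp [Finset.mem_compl, h])]
  · rw [if_neg h, if_neg (by simp [Finset.mem_compl]; tauto)]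

lemma MTsig_eq_zero (A : Finset V) {u v : V} (h : (u ∈ A) ↔ (v ∈ A)) : MTsig A u v = 0 :=
  if_pos h

lemma MTsig_eq_one (A : Finset V) {u v : V} (h : ¬((u ∈ A) ↔ (v ∈ A))) : MTsig A u v = 1 :=
  if_neg h

/-- Twice a cut value as a symmetric double sum over all ordered pairs. -/
lemma MTtwo_cut (G : SimpleGraph V) (c : V → V → ℝ) (hcs : ∀ u v, c u v = c v u)
    (A : Finset V) :
    2 * cutVal G c A = ∑ u, ∑ v, MTwt G c u v * MTsig A u v := by
  have hpt : ∀ u v, MTwt G c u v * MTsig A u v =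
      (if u ∈ A then (if v ∈ Aᶜ then MTwt G c u v else 0) else 0)
      + (if v ∈ A then (if u ∈ Aᶜ then MTwt G c u v else 0) else 0) := by
    intro u v
    by_cases h1 : u ∈ A <;> by_cases h2 : v ∈ A <;>
      simp [MTsig, h1, h2, Finset.mem_compl]
  have hsplit : (∑ u, ∑ v, MTwt G c u v * MTsig A u v)
      = (∑ u, ∑ v, (if u ∈ A then (if v ∈ Aᶜ then MTwt G c u v else 0) else 0))
      + (∑ u, ∑ v, (if v ∈ A then (if u ∈ Aᶜ then MTwt G c u v else 0) else 0)) := by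
    rw [← Finset.sum_add_distrib]
    apply Finset.sum_congr rfl
    intro u _
    rw [← Finset.sum_add_distrib]
    exact Finset.sum_congr rfl (fun v _ => hpt u v)
  have hfirst : (∑ u, ∑ v, (if u ∈ A then (if v ∈ Aᶜ then MTwt G c u v else 0) else 0))
      = cutVal G c A := by
    rw [MTcutVal_eq]
    rw [show (∑ u, ∑ v, (if u ∈ A then (if v ∈ Aᶜ then MTwt G c u v else 0) else 0))
        = ∑ u, (if u ∈ A then (∑ v, (if v ∈ Aᶜ then MTwt G c u v else 0)) else 0) by
      apply Finset.sum_congr rfl; intro u _; split <;> simp]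
    rw [Finset.sum_ite_mem, Finset.univ_inter]
    apply Finset.sum_congr rfl
    intro u _
    rw [Finset.sum_ite_mem, Finset.univ_inter]
  have hsecond : (∑ u, ∑ v, (if v ∈ A then (if u ∈ Aᶜ then MTwt G c u v else 0) else 0))
      = cutVal G c A := by
    rw [Finset.sum_comm]
    rw [MTcutVal_eq]
    rw [show (∑ v, ∑ u, (if v ∈ A then (if u ∈ Aᶜ then MTwt G c u v else 0) else 0))
        = ∑ v, (if v ∈ A then (∑ u, (if u ∈ Aᶜ then MTwt G c u v else 0)) else 0) by
      apply Finset.sum_congr rfl; intro v _; split <;> simp]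
    rw [Finset.sum_ite_mem, Finset.univ_inter]
    apply Finset.sum_congr rfl
    intro v _
    rw [Finset.sum_ite_mem, Finset.univ_inter]
    exact Finset.sum_congr rfl (fun u _ => MTwt_symm G c hcs u v)
  rw [hsplit, hfirst, hsecond]; ring

lemma MTcutVal_compl (G : SimpleGraph V) (c : V → V → ℝ) (hcs : ∀ u v, c u v = c v u)
    (A : Finset V) : cutVal G c Aᶜ = cutVal G c A := by
  have h1 := MTtwo_cut G c hcs A
  have h2 := MTtwo_cut G c hcs Aᶜ
  have h3 : (∑ u, ∑ v, MTwt G c u v * MTsig Aᶜ u v)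
      = ∑ u, ∑ v, MTwt G c u v * MTsig A u v := by
    apply Finset.sum_congr rfl; intro u _
    apply Finset.sum_congr rfl; intro v _
    rw [MTsig_compl]
  linarith

/-- Summed representation over an index family. -/
lemma MTsum_two_cut {ι : Type*} (G : SimpleGraph V) (c : V → V → ℝ)
    (hcs : ∀ u v, c u v = c v u) (I : Finset ι) (F : ι → Finset V) :
    ∑ i ∈ I, 2 * cutVal G c (F i)
      = ∑ u, ∑ v, MTwt G c u v * (∑ i ∈ I, MTsig (F i) u v) := by
  have h1 : ∑ i ∈ I, 2 * cutVal G c (F i)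
      = ∑ i ∈ I, ∑ u, ∑ v, MTwt G c u v * MTsig (F i) u v :=
    Finset.sum_congr rfl (fun i _ => MTtwo_cut G c hcs (F i))
  rw [h1, Finset.sum_comm]
  apply Finset.sum_congr rfl
  intro u _
  rw [Finset.sum_comm]
  apply Finset.sum_congr rfl
  intro v _
  rw [Finset.mul_sum]

/-- Scaled representation. -/
lemma MTsmul_two_cut (G : SimpleGraph V) (c : V → V → ℝ)
    (hcs : ∀ u v, c u v = c v u) (r : ℝ) (A : Finset V) :
    r * (2 * cutVal G c A)
      = ∑ u, ∑ v, MTwt G c u v * (r * MTsig A u v) := by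
  rw [MTtwo_cut G c hcs A, Finset.mul_sum]
  apply Finset.sum_congr rfl
  intro u _
  rw [Finset.mul_sum]
  apply Finset.sum_congr rfl
  intro v _
  ring

/-- `MTsig` as an indicator of a decidable proposition. -/
lemma MTsig_ite (A : Finset V) (u v : V) (p : Prop) [Decidable p]
    (h : ¬((u ∈ A) ↔ (v ∈ A)) ↔ p) : MTsig A u v = if p then 1 else 0 := by
  unfold MTsig
  by_cases hp : p
  · rw [if_pos hp, if_neg (by tauto)]
  · rw [if_pos (by tauto), if_neg hp]

/-- Core combinatorial bound for pairs inside `U`. -/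
lemma MTcore_bound {α : Type*} [DecidableEq α] (Mu Mv : Finset α) :
    ((if Mu = Mv then 0 else
        ((if Mu.card = 1 then 1 else 0) + (if Mv.card = 1 then 1 else 0))) : ℕ)
      + (max Mu.card Mv.card - max (min Mu.card Mv.card) 2)
      ≤ (symmDiff Mu Mv).card := by
  have hΔ : (symmDiff Mu Mv).card = (Mu \ Mv).card + (Mv \ Mu).card := by
    show ((Mu \ Mv) ∪ (Mv \ Mu)).card = _
    exact Finset.card_union_of_disjoint (Finset.sdiff_disjoint.mono_right Finset.sdiff_subset)
  have h1 : Mu.card ≤ (Mu \ Mv).card + Mv.card := Finset.card_le_card_sdiff_add_card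
  have h2 : Mv.card ≤ (Mv \ Mu).card + Mu.card := Finset.card_le_card_sdiff_add_card
  by_cases h : Mu = Mv
  · subst h; simp
  · have h3 : 1 ≤ (symmDiff Mu Mv).card := by
      rw [Nat.one_le_iff_ne_zero, Ne, Finset.card_eq_zero]
      intro hh
      exact h (by simpa [symmDiff_eq_bot] using hh)
    by_cases ha : Mu.card = 1 <;> by_cases hb : Mv.card = 1
    · have hu1 : 1 ≤ (Mu \ Mv).card := by
        rw [Nat.one_le_iff_ne_zero, Ne, Finset.card_eq_zero, Finset.sdiff_eq_empty_iff_subset]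
        intro hsub
        exact h (Finset.eq_of_subset_of_card_le hsub (by omega))
      have hv1 : 1 ≤ (Mv \ Mu).card := by
        rw [Nat.one_le_iff_ne_zero, Ne, Finset.card_eq_zero, Finset.sdiff_eq_empty_iff_subset]
        intro hsub
        exact h (Finset.eq_of_subset_of_card_le hsub (by omega)).symm
      simp only [if_neg h, if_pos ha, if_pos hb]
      omega
    · simp only [if_neg h, if_pos ha, if_neg hb]; omega
    · simp only [if_neg h, if_neg ha, if_pos hb]; omega
    · simp only [if_neg h, if_neg ha, if_neg hb]; omega

lemma MTwalk_cross (G : SimpleGraph V) (W : Finset V) :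
    ∀ {a b : V} (_ : G.Walk a b), a ∈ W → b ∉ W →
      ∃ x y, G.Adj x y ∧ x ∈ W ∧ y ∉ W := by
  intro a b p
  induction p with
  | nil => intro h1 h2; exact absurd h1 h2
  | @cons x y z h p ih =>
    intro h1 h2
    by_cases hy : y ∈ W
    · exact ih hy h2
    · exact ⟨x, y, h, h1, hy⟩

lemma MTcutVal_pos (G : SimpleGraph V) (hG : G.Connected) (c : V → V → ℝ)
    (hc : ∀ u v, G.Adj u v → 0 < c u v) (W : Finset V)
    (hne : W.Nonempty) (hnu : W ≠ Finset.univ) : 0 < cutVal G c W := by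
  classical
  obtain ⟨a, ha⟩ := hne
  have : ∃ b, b ∉ W := by
    by_contra hall
    push_neg at hall
    exact hnu (Finset.eq_univ_iff_forall.2 hall)
  obtain ⟨b, hb⟩ := this
  obtain ⟨p⟩ := hG.preconnected a b
  obtain ⟨x, y, hadj, hx, hy⟩ := MTwalk_cross G W p ha hb
  unfold cutVal
  apply Finset.sum_pos'
  · intro u _
    apply Finset.sum_nonneg
    intro v _
    split
    · exact le_of_lt (hc u v (by assumption))
    · exact le_refl 0
  · refine ⟨x, hx, ?_⟩
    apply Finset.sum_pos'
    · intro v _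
      split
      · exact le_of_lt (hc x v (by assumption))
      · exact le_refl 0
    · refine ⟨y, Finset.mem_compl.2 hy, ?_⟩
      rw [if_pos hadj]
      exact hc x y hadj

end MTAux

/-- A minimal transversal S ⊆ U of the nonempty collection
𝒞 = {Q ⊊ V : Uᶜ ⊊ Q, d(Q) ≤ d(U)} associated with an α-approximate minimum cut
(U, Uᶜ) of a connected graph satisfies |S| ≤ ⌊2α⌋+1. -/
theorem minimal_transversal_card_le
    (G : SimpleGraph V) (hG : G.Connected)
    (c : V → V → ℝ) (hc : ∀ u v, G.Adj u v → 0 < c u v) (hcsymm : ∀ u v, c u v = c v u)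
    (α : ℝ) (hα : 1 ≤ α) (lam : ℝ)
    (hlam : IsLeast {x : ℝ | ∃ W : Finset V, W.Nonempty ∧ W ≠ Finset.univ ∧ cutVal G c W = x} lam)
    (U : Finset V) (hUne : U.Nonempty) (hUp : U ≠ Finset.univ)
    (happrox : cutVal G c U ≤ α * lam)
    (hCne : ∃ Q : Finset V, Uᶜ ⊂ Q ∧ Q ≠ Finset.univ ∧ cutVal G c Q ≤ cutVal G c U)
    (S : Finset V) (hSU : S ⊆ U)
    (htrans : ∀ Q : Finset V, Uᶜ ⊂ Q → Q ≠ Finset.univ → cutVal G c Q ≤ cutVal G c U →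
      (S ∩ Q).Nonempty)
    (hminimal : ∀ S' : Finset V, S' ⊂ S →
      ∃ Q : Finset V, Uᶜ ⊂ Q ∧ Q ≠ Finset.univ ∧ cutVal G c Q ≤ cutVal G c U ∧ S' ∩ Q = ∅) :
    S.card ≤ ⌊2 * α⌋₊ + 1 := by
  classical
  -- abbreviations
  set Δ : ℝ := cutVal G c U with hΔdef
  -- positivity of lam
  have hlampos : 0 < lam := by
    obtain ⟨W₀, hW₀ne, hW₀nu, hW₀eq⟩ := hlam.1
    rw [← hW₀eq]
    exact MTcutVal_pos G hG c hc W₀ hW₀ne hW₀nu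
  -- witnesses
  have hwit : ∀ s ∈ S, ∃ Q : Finset V,
      Uᶜ ⊂ Q ∧ Q ≠ Finset.univ ∧ cutVal G c Q ≤ Δ ∧ S ∩ Q = {s} := by
    intro s hs
    obtain ⟨Q, h1, h2, h3, h4⟩ := hminimal (S.erase s) (Finset.erase_ssubset hs)
    refine ⟨Q, h1, h2, h3, ?_⟩
    have h5 := htrans Q h1 h2 h3
    have hsub : S ∩ Q ⊆ {s} := by
      intro t ht
      rw [Finset.mem_singleton]
      by_contra hne
      have : t ∈ (S.erase s) ∩ Q := by
        rw [Finset.mem_inter] at ht ⊢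
        exact ⟨Finset.mem_erase.2 ⟨hne, ht.1⟩, ht.2⟩
      rw [h4] at this
      exact absurd this (Finset.notMem_empty t)
    apply Finset.Subset.antisymm hsub
    obtain ⟨t, ht⟩ := h5
    have := hsub ht
    rw [Finset.mem_singleton] at this
    subst this
    exact Finset.singleton_subset_iff.2 ht
  choose! Q hQ1 hQ2 hQ3 hQ4 using hwit
  -- membership multiplicity structures
  set M : V → Finset V := fun v => S.filter (fun s => v ∈ Q s ∧ v ∈ U) with hMdef
  set P : V → Finset V := fun s => Finset.univ.filter (fun v => M v = {s}) with hPdef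
  set L : ℕ → Finset V := fun j => Finset.univ.filter (fun v => j ≤ (M v).card) with hLdef
  set k : ℕ := S.card with hkdef
  set J : Finset ℕ := Finset.Icc 3 k with hJdef
  have hMsub : ∀ v, M v ⊆ S := fun v => Finset.filter_subset _ _
  have hMempty : ∀ v, v ∉ U → M v = ∅ := by
    intro v hv
    rw [hMdef]
    apply Finset.filter_eq_empty_iff.2
    intro s _
    tauto
  have hMmem : ∀ (s v : V), s ∈ M v ↔ (s ∈ S ∧ v ∈ Q s ∧ v ∈ U) := by
    intro s v
    rw [hMdef]
    simp [Finset.mem_filter]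
  have hMself : ∀ s ∈ S, M s = {s} := by
    intro s hs
    ext t
    rw [hMmem, Finset.mem_singleton]
    constructor
    · rintro ⟨htS, hsQ, hsU⟩
      have : s ∈ S ∩ Q t := Finset.mem_inter.2 ⟨hs, hsQ⟩
      rw [hQ4 t htS] at this
      exact (Finset.mem_singleton.1 this).symm
    · rintro rfl
      have : t ∈ S ∩ Q t := by rw [hQ4 t hs]; exact Finset.mem_singleton_self t
      exact ⟨hs, (Finset.mem_inter.1 this).2, hSU hs⟩
  have hMcard_le : ∀ v, (M v).card ≤ k := fun v => Finset.card_le_card (hMsub v)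
  have hPmem : ∀ (u s : V), u ∈ P s ↔ M u = {s} := by
    intro u s
    rw [hPdef]
    simp [Finset.mem_filter]
  have hLmem : ∀ (u : V) (j : ℕ), u ∈ L j ↔ j ≤ (M u).card := by
    intro u j
    rw [hLdef]
    simp [Finset.mem_filter]
  have hQD : ∀ s ∈ S, Uᶜ ⊆ Q s := fun s hs => (hQ1 s hs).subset
  have hQmemD : ∀ s ∈ S, ∀ v, v ∉ U → v ∈ Q s := by
    intro s hs v hv
    exact hQD s hs (Finset.mem_compl.2 hv)
  have hQmemU : ∀ s ∈ S, ∀ u, u ∈ U → (u ∈ Q s ↔ s ∈ M u) := by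
    intro s hs u hu
    rw [hMmem]
    tauto
  -- lam lower bounds for the private parts
  have hsP : ∀ s ∈ S, s ∈ P s := by
    intro s hs
    rw [hPmem]
    exact hMself s hs
  obtain ⟨x₀, hx₀⟩ : ∃ x, x ∉ U := by
    by_contra hall
    push_neg at hall
    exact hUp (Finset.eq_univ_iff_forall.2 hall)
  have hlamP : ∀ s ∈ S, lam ≤ cutVal G c (P s) := by
    intro s hs
    apply hlam.2
    refine ⟨P s, ⟨s, hsP s hs⟩, ?_, rfl⟩
    intro hPuniv
    have : x₀ ∈ P s := hPuniv ▸ Finset.mem_univ x₀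
    rw [hPmem] at this
    rw [hMempty x₀ hx₀] at this
    exact absurd this.symm (Finset.singleton_ne_empty s)
  -- barrier for the level sets
  have hbar : ∀ j ∈ J, Δ ≤ cutVal G c (Uᶜ ∪ L j) := by
    intro j hj
    rw [hJdef, Finset.mem_Icc] at hj
    rcases Finset.eq_empty_or_nonempty (L j) with hLe | hLn
    · rw [hLe, Finset.union_empty, MTcutVal_compl G c hcsymm]
    · obtain ⟨z, hz⟩ := hLn
      have hzL : j ≤ (M z).card := (hLmem z j).1 hz
      have hMzne : (M z).Nonempty := by
        rw [← Finset.card_pos]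
        omega
      obtain ⟨s₁, hs₁⟩ := hMzne
      have hs₁S : s₁ ∈ S := hMsub z hs₁
      have hzU : z ∈ U := ((hMmem s₁ z).1 hs₁).2.2
      have hSL : ∀ t ∈ S, t ∉ L j := by
        intro t ht htL
        rw [hLmem, hMself t ht, Finset.card_singleton] at htL
        omega
      have hss : Uᶜ ⊂ Uᶜ ∪ L j := by
        apply Finset.ssubset_iff_of_subset (Finset.subset_union_left) |>.2
        exact ⟨z, Finset.mem_union_right _ hz, by rwa [Finset.mem_compl, not_not]⟩
      have hnu : Uᶜ ∪ L j ≠ Finset.univ := by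
        intro hcontra
        have : s₁ ∈ Uᶜ ∪ L j := hcontra ▸ Finset.mem_univ s₁
        rcases Finset.mem_union.1 this with h | h
        · exact (Finset.mem_compl.1 h) (hSU hs₁S)
        · exact hSL s₁ hs₁S h
      by_contra hlt
      push_neg at hlt
      obtain ⟨t, ht⟩ := htrans (Uᶜ ∪ L j) hss hnu (le_of_lt hlt)
      rw [Finset.mem_inter] at ht
      rcases Finset.mem_union.1 ht.2 with h | h
      · exact (Finset.mem_compl.1 h) (hSU ht.1)
      · exact hSL t ht.1 h
  -- counting bound for private-part membership
  have hPcount : ∀ u : V,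
      (S.filter (fun s => M u = {s})).card ≤ (if (M u).card = 1 then 1 else 0) := by
    intro u
    by_cases hc1 : (M u).card = 1
    · rw [if_pos hc1]
      obtain ⟨t, ht⟩ := Finset.card_eq_one.1 hc1
      calc (S.filter (fun s => M u = {s})).card ≤ ({t} : Finset V).card := by
            apply Finset.card_le_card
            intro s hs
            rw [Finset.mem_filter] at hs
            rw [Finset.mem_singleton]
            have h2 : ({t} : Finset V) = {s} := ht ▸ hs.2
            exact (Finset.singleton_inj.1 h2).symm
        _ = 1 := Finset.card_singleton t
    · rw [if_neg hc1, Nat.le_zero, Finset.card_eq_zero]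
      apply Finset.filter_eq_empty_iff.2
      intro s _ hMs
      exact hc1 (by rw [hMs]; exact Finset.card_singleton s)
  -- the pointwise key inequality, mixed case
  have hmix : ∀ u v : V, u ∈ U → v ∉ U →
      (∑ s ∈ S, MTsig (P s) u v) + (∑ j ∈ J, MTsig (Uᶜ ∪ L j) u v) + (k : ℝ) * MTsig U u v
      ≤ (2 : ℝ) * MTsig U u v + (J.card : ℝ) * MTsig U u v + ∑ s ∈ S, MTsig (Q s) u v := by
    intro u v hu hv
    have hMv : M v = ∅ := hMempty v hv
    have hsigU : MTsig U u v = 1 := MTsig_eq_one U (by simp [hu, hv])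
    have e1 : (∑ s ∈ S, MTsig (P s) u v) = ((S.filter (fun s => M u = {s})).card : ℝ) := by
      rw [Finset.card_filter]
      push_cast
      apply Finset.sum_congr rfl
      intro s _
      apply MTsig_ite
      have hvP : v ∉ P s := by
        rw [hPmem, hMv]
        exact fun hh => (Finset.singleton_ne_empty s) hh.symm
      rw [hPmem u s]
      simp [hvP]
    have e2 : (∑ j ∈ J, MTsig (Uᶜ ∪ L j) u v)
        = ((J.filter (fun j => ¬ j ≤ (M u).card)).card : ℝ) := by
      rw [Finset.card_filter]
      push_cast
      apply Finset.sum_congr rfl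
      intro j _
      apply MTsig_ite
      have hvin : v ∈ Uᶜ ∪ L j := Finset.mem_union_left _ (Finset.mem_compl.2 hv)
      have huin : (u ∈ Uᶜ ∪ L j) ↔ (j ≤ (M u).card) := by
        rw [Finset.mem_union, Finset.mem_compl, hLmem]
        simp [hu]
      simp [hvin, huin]
    have e3 : (∑ s ∈ S, MTsig (Q s) u v) = ((S.filter (fun s => s ∉ M u)).card : ℝ) := by
      rw [Finset.card_filter]
      push_cast
      apply Finset.sum_congr rfl
      intro s hs
      apply MTsig_ite
      have h1 : v ∈ Q s := hQmemD s hs v hv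
      have h2 := hQmemU s hs u hu
      simp [h1, h2]
    rw [e1, e2, e3, hsigU]
    have hfil1 : (J.filter (fun j => j ≤ (M u).card)).card
        + (J.filter (fun j => ¬ j ≤ (M u).card)).card = J.card :=
      Finset.card_filter_add_card_filter_not (p := fun j => j ≤ (M u).card)
    have hMeq : S.filter (fun s => s ∈ M u) = M u := by
      ext s
      rw [Finset.mem_filter]
      exact ⟨fun h => h.2, fun h => ⟨hMsub u h, h⟩⟩
    have hfil2 : (M u).card + (S.filter (fun s => s ∉ M u)).card = k := by
      have h := Finset.card_filter_add_card_filter_not (p := fun s => s ∈ M u) (s := S)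
      rw [hMeq] at h
      rw [hkdef]
      exact h
    have hall : (S.filter (fun s => M u = {s})).card
        + (J.filter (fun j => ¬ j ≤ (M u).card)).card + k
        ≤ 2 + J.card + (S.filter (fun s => s ∉ M u)).card := by
      have hP' := hPcount u
      rcases le_or_gt 3 (M u).card with h3 | h3
      · have hicc : (J.filter (fun j => j ≤ (M u).card)) = Finset.Icc 3 (M u).card := by
          ext j
          rw [Finset.mem_filter, hJdef, Finset.mem_Icc, Finset.mem_Icc]
          have := hMcard_le u
          constructor
          · rintro ⟨⟨hj1, _⟩, hj3⟩; exact ⟨hj1, hj3⟩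
          · rintro ⟨hj1, hj3⟩; exact ⟨⟨hj1, by omega⟩, hj3⟩
        have hcc : (J.filter (fun j => j ≤ (M u).card)).card = (M u).card - 2 := by
          rw [hicc, Nat.card_Icc]
          omega
        by_cases h1 : (M u).card = 1
        · omega
        · rw [if_neg h1] at hP'; omega
      · by_cases h1 : (M u).card = 1
        · rw [if_pos h1] at hP'; omega
        · rw [if_neg h1] at hP'; omega
    have hcast := (Nat.cast_le (α := ℝ)).2 hall
    push_cast at hcast
    linarith
  -- the pointwise key inequality, both inside U
  have huu : ∀ u v : V, u ∈ U → v ∈ U →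
      (∑ s ∈ S, MTsig (P s) u v) + (∑ j ∈ J, MTsig (Uᶜ ∪ L j) u v) + (k : ℝ) * MTsig U u v
      ≤ (2 : ℝ) * MTsig U u v + (J.card : ℝ) * MTsig U u v + ∑ s ∈ S, MTsig (Q s) u v := by
    intro u v hu hv
    have hsigU : MTsig U u v = 0 := MTsig_eq_zero U (by simp [hu, hv])
    have e1 : (∑ s ∈ S, MTsig (P s) u v)
        = ((S.filter (fun s => ¬((M u = {s}) ↔ (M v = {s})))).card : ℝ) := by
      rw [Finset.card_filter]
      push_cast
      apply Finset.sum_congr rfl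
      intro s _
      apply MTsig_ite
      rw [hPmem u s, hPmem v s]
    have e2 : (∑ j ∈ J, MTsig (Uᶜ ∪ L j) u v)
        = ((J.filter (fun j => ¬((j ≤ (M u).card) ↔ (j ≤ (M v).card)))).card : ℝ) := by
      rw [Finset.card_filter]
      push_cast
      apply Finset.sum_congr rfl
      intro j _
      apply MTsig_ite
      have huin : (u ∈ Uᶜ ∪ L j) ↔ (j ≤ (M u).card) := by
        rw [Finset.mem_union, Finset.mem_compl, hLmem]
        simp [hu]
      have hvin : (v ∈ Uᶜ ∪ L j) ↔ (j ≤ (M v).card) := by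
        rw [Finset.mem_union, Finset.mem_compl, hLmem]
        simp [hv]
      rw [huin, hvin]
    have e3 : (∑ s ∈ S, MTsig (Q s) u v) = (((symmDiff (M u) (M v))).card : ℝ) := by
      have hfe : symmDiff (M u) (M v) = S.filter (fun s => s ∈ symmDiff (M u) (M v)) := by
        ext s
        rw [Finset.mem_filter]
        constructor
        · intro h
          refine ⟨?_, h⟩
          rw [Finset.mem_symmDiff] at h
          rcases h with ⟨h1, _⟩ | ⟨h1, _⟩
          · exact hMsub u h1
          · exact hMsub v h1
        · exact fun h => h.2
      rw [hfe, Finset.card_filter]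
      push_cast
      apply Finset.sum_congr rfl
      intro s hs
      apply MTsig_ite
      rw [hQmemU s hs u hu, hQmemU s hs v hv, Finset.mem_symmDiff]
      tauto
    have b1 : (S.filter (fun s => ¬((M u = {s}) ↔ (M v = {s})))).card
        ≤ (if M u = M v then 0 else
            ((if (M u).card = 1 then 1 else 0) + (if (M v).card = 1 then 1 else 0))) := by
      by_cases hMM : M u = M v
      · rw [if_pos hMM, Nat.le_zero, Finset.card_eq_zero]
        apply Finset.filter_eq_empty_iff.2
        intro s _
        rw [hMM]
        exact fun h => h Iff.rfl
      · rw [if_neg hMM]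
        calc (S.filter (fun s => ¬((M u = {s}) ↔ (M v = {s})))).card
            ≤ ((S.filter (fun s => M u = {s})) ∪ (S.filter (fun s => M v = {s}))).card := by
              apply Finset.card_le_card
              intro s hs
              rw [Finset.mem_filter] at hs
              rw [Finset.mem_union, Finset.mem_filter, Finset.mem_filter]
              rcases hs with ⟨hsS, hniff⟩
              by_cases h1 : M u = {s}
              · exact Or.inl ⟨hsS, h1⟩
              · by_cases h2 : M v = {s}
                · exact Or.inr ⟨hsS, h2⟩
                · exact absurd (iff_of_false h1 h2) hniff
          _ ≤ (S.filter (fun s => M u = {s})).card + (S.filter (fun s => M v = {s})).card :=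
              Finset.card_union_le _ _
          _ ≤ _ := Nat.add_le_add (hPcount u) (hPcount v)
    have b2 : (J.filter (fun j => ¬((j ≤ (M u).card) ↔ (j ≤ (M v).card)))).card
        ≤ max (M u).card (M v).card - max (min (M u).card (M v).card) 2 := by
      calc (J.filter (fun j => ¬((j ≤ (M u).card) ↔ (j ≤ (M v).card)))).card
          ≤ (Finset.Icc (max (min (M u).card (M v).card) 2 + 1)
              (max (M u).card (M v).card)).card := by
            apply Finset.card_le_card
            intro j hj
            rw [Finset.mem_filter, hJdef, Finset.mem_Icc] at hj
            rw [Finset.mem_Icc]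
            rcases hj with ⟨⟨hj3, _⟩, hniff⟩
            by_cases h1 : j ≤ (M u).card <;> by_cases h2 : j ≤ (M v).card
            · exact absurd (iff_of_true h1 h2) hniff
            · constructor <;> omega
            · constructor <;> omega
            · exact absurd (iff_of_false h1 h2) hniff
        _ = max (M u).card (M v).card - max (min (M u).card (M v).card) 2 := by
            rw [Nat.card_Icc]
            omega
    have hcore := MTcore_bound (M u) (M v)
    rw [e1, e2, e3, hsigU]
    have hall : (S.filter (fun s => ¬((M u = {s}) ↔ (M v = {s})))).card
        + (J.filter (fun j => ¬((j ≤ (M u).card) ↔ (j ≤ (M v).card)))).card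
        ≤ (symmDiff (M u) (M v)).card :=
      le_trans (Nat.add_le_add b1 b2) hcore
    have hcast := (Nat.cast_le (α := ℝ)).2 hall
    push_cast at hcast
    linarith
  -- the pointwise key inequality, both outside U
  have hdd : ∀ u v : V, u ∉ U → v ∉ U →
      (∑ s ∈ S, MTsig (P s) u v) + (∑ j ∈ J, MTsig (Uᶜ ∪ L j) u v) + (k : ℝ) * MTsig U u v
      ≤ (2 : ℝ) * MTsig U u v + (J.card : ℝ) * MTsig U u v + ∑ s ∈ S, MTsig (Q s) u v := by
    intro u v hu hv
    have z1 : (∑ s ∈ S, MTsig (P s) u v) = 0 := by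
      apply Finset.sum_eq_zero
      intro s _
      apply MTsig_eq_zero
      have h1 : u ∉ P s := by
        rw [hPmem, hMempty u hu]
        exact fun hh => (Finset.singleton_ne_empty s) hh.symm
      have h2 : v ∉ P s := by
        rw [hPmem, hMempty v hv]
        exact fun hh => (Finset.singleton_ne_empty s) hh.symm
      simp [h1, h2]
    have z2 : (∑ j ∈ J, MTsig (Uᶜ ∪ L j) u v) = 0 := by
      apply Finset.sum_eq_zero
      intro j _
      apply MTsig_eq_zero
      have h1 : u ∈ Uᶜ ∪ L j := Finset.mem_union_left _ (Finset.mem_compl.2 hu)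
      have h2 : v ∈ Uᶜ ∪ L j := Finset.mem_union_left _ (Finset.mem_compl.2 hv)
      simp [h1, h2]
    have z3 : (∑ s ∈ S, MTsig (Q s) u v) = 0 := by
      apply Finset.sum_eq_zero
      intro s hs
      apply MTsig_eq_zero
      simp [hQmemD s hs u hu, hQmemD s hs v hv]
    have z4 : MTsig U u v = 0 := MTsig_eq_zero U (by simp [hu, hv])
    rw [z1, z2, z3, z4]
    norm_num
  -- dispatch
  have key : ∀ u v : V,
      (∑ s ∈ S, MTsig (P s) u v) + (∑ j ∈ J, MTsig (Uᶜ ∪ L j) u v) + (k : ℝ) * MTsig U u v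
      ≤ (2 : ℝ) * MTsig U u v + (J.card : ℝ) * MTsig U u v + ∑ s ∈ S, MTsig (Q s) u v := by
    intro u v
    by_cases hu : u ∈ U <;> by_cases hv : v ∈ U
    · exact huu u v hu hv
    · exact hmix u v hu hv
    · have h1 : (∑ s ∈ S, MTsig (P s) u v) = ∑ s ∈ S, MTsig (P s) v u :=
        Finset.sum_congr rfl (fun s _ => MTsig_symm _ u v)
      have h2 : (∑ j ∈ J, MTsig (Uᶜ ∪ L j) u v) = ∑ j ∈ J, MTsig (Uᶜ ∪ L j) v u :=
        Finset.sum_congr rfl (fun j _ => MTsig_symm _ u v)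
      have h3 : (∑ s ∈ S, MTsig (Q s) u v) = ∑ s ∈ S, MTsig (Q s) v u :=
        Finset.sum_congr rfl (fun s _ => MTsig_symm _ u v)
      have h4 : MTsig U u v = MTsig U v u := MTsig_symm U u v
      rw [h1, h2, h3, h4]
      exact hmix v u hv hu
    · exact hdd u v hu hv
  -- the grand inequality
  have grand : (∑ s ∈ S, 2 * cutVal G c (P s)) + (∑ j ∈ J, 2 * cutVal G c (Uᶜ ∪ L j))
      + (k : ℝ) * (2 * Δ)
      ≤ (2 : ℝ) * (2 * Δ) + (J.card : ℝ) * (2 * Δ) + ∑ s ∈ S, 2 * cutVal G c (Q s) := by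
    rw [hΔdef, MTsum_two_cut G c hcsymm S P, MTsum_two_cut G c hcsymm J (fun j => Uᶜ ∪ L j),
        MTsum_two_cut G c hcsymm S Q, MTsmul_two_cut G c hcsymm ((k : ℕ) : ℝ) U,
        MTsmul_two_cut G c hcsymm 2 U, MTsmul_two_cut G c hcsymm ((J.card : ℕ) : ℝ) U]
    have eL : (∑ u, ∑ v, MTwt G c u v * (∑ s ∈ S, MTsig (P s) u v))
        + (∑ u, ∑ v, MTwt G c u v * (∑ j ∈ J, MTsig (Uᶜ ∪ L j) u v))
        + (∑ u, ∑ v, MTwt G c u v * ((k : ℝ) * MTsig U u v))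
        = ∑ u, ∑ v, MTwt G c u v * ((∑ s ∈ S, MTsig (P s) u v)
            + (∑ j ∈ J, MTsig (Uᶜ ∪ L j) u v) + (k : ℝ) * MTsig U u v) := by
      rw [← Finset.sum_add_distrib, ← Finset.sum_add_distrib]
      apply Finset.sum_congr rfl
      intro u _
      rw [← Finset.sum_add_distrib, ← Finset.sum_add_distrib]
      apply Finset.sum_congr rfl
      intro v _
      ring
    have eR : (∑ u, ∑ v, MTwt G c u v * ((2 : ℝ) * MTsig U u v))
        + (∑ u, ∑ v, MTwt G c u v * ((J.card : ℝ) * MTsig U u v))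
        + (∑ u, ∑ v, MTwt G c u v * (∑ s ∈ S, MTsig (Q s) u v))
        = ∑ u, ∑ v, MTwt G c u v * ((2 : ℝ) * MTsig U u v
            + (J.card : ℝ) * MTsig U u v + ∑ s ∈ S, MTsig (Q s) u v) := by
      rw [← Finset.sum_add_distrib, ← Finset.sum_add_distrib]
      apply Finset.sum_congr rfl
      intro u _
      rw [← Finset.sum_add_distrib, ← Finset.sum_add_distrib]
      apply Finset.sum_congr rfl
      intro v _
      ring
    rw [eL, eR]
    apply Finset.sum_le_sum
    intro u _
    apply Finset.sum_le_sum
    intro v _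
    exact mul_le_mul_of_nonneg_left (key u v) (MTwt_nonneg G c hc u v)
  -- bounds on the three sums
  have hsum1 : (k : ℝ) * (2 * lam) ≤ ∑ s ∈ S, 2 * cutVal G c (P s) := by
    have h : ∑ _s ∈ S, (2 * lam) ≤ ∑ s ∈ S, 2 * cutVal G c (P s) :=
      Finset.sum_le_sum (fun s hs => by have := hlamP s hs; linarith)
    rw [Finset.sum_const, nsmul_eq_mul, ← hkdef] at h
    exact h
  have hsum2 : (J.card : ℝ) * (2 * Δ) ≤ ∑ j ∈ J, 2 * cutVal G c (Uᶜ ∪ L j) := by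
    have h : ∑ _j ∈ J, (2 * Δ) ≤ ∑ j ∈ J, 2 * cutVal G c (Uᶜ ∪ L j) :=
      Finset.sum_le_sum (fun j hj => by have := hbar j hj; linarith)
    rw [Finset.sum_const, nsmul_eq_mul] at h
    exact h
  have hsum3 : ∑ s ∈ S, 2 * cutVal G c (Q s) ≤ (k : ℝ) * (2 * Δ) := by
    have h : ∑ s ∈ S, 2 * cutVal G c (Q s) ≤ ∑ _s ∈ S, (2 * Δ) :=
      Finset.sum_le_sum (fun s hs => by have := hQ3 s hs; linarith)
    rw [Finset.sum_const, nsmul_eq_mul, ← hkdef] at h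
    exact h
  -- conclude k * lam ≤ 2Δ
  have hklam : (k : ℝ) * lam ≤ 2 * Δ := by nlinarith [grand, hsum1, hsum2, hsum3]
  have hk2α : (k : ℝ) ≤ 2 * α := by
    have h1 : (k : ℝ) * lam ≤ (2 * α) * lam := by
      calc (k : ℝ) * lam ≤ 2 * Δ := hklam
        _ ≤ 2 * (α * lam) := by rw [hΔdef] at *; linarith [happrox]
        _ = (2 * α) * lam := by ring
    exact le_of_mul_le_mul_right h1 hlampos
  have hfloor : S.card ≤ ⌊2 * α⌋₊ := by
    apply Nat.le_floor
    rw [← hkdef]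
    exact hk2α
  omega
end

section
/- Let G=(V,E) be a finite graph with positive edge costs, let U be a nonempty proper subset of V, let 𝒞 := {Q ⊊ V : V∖U ⊊ Q and d(Q) ≤ d(U)}, suppose 𝒞 is nonempty, and let S ⊆ U be a minimal transversal of 𝒞 (a subset of U intersecting every member of 𝒞 such that no proper subset of S intersects every member of 𝒞). Fix u ∈ S, and let (V∖A, A) be the source-minimal minimum (S∖{u}, V∖U)-terminal cut. Then d(A) ≤ d(U) and u ∈ A. -/
open Finset

variable {V : Type*} [Fintype V] [DecidableEq V]

/-- Let S ⊆ U be a minimal transversal of the nonempty collection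
𝒞 = {Q ⊊ V : Uᶜ ⊊ Q, d(Q) ≤ d(U)}, let u ∈ S and let (Aᶜ, A) be the
source-minimal minimum (S \ {u}, Uᶜ)-terminal cut. Then d(A) ≤ d(U) and u ∈ A. -/
theorem source_minimal_cut_misses_only_u
    (G : SimpleGraph V)
    (c : V → V → ℝ) (hc : ∀ u v, G.Adj u v → 0 < c u v) (hcsymm : ∀ u v, c u v = c v u)
    (U : Finset V) (hUne : U.Nonempty) (hUp : U ≠ Finset.univ)
    (hCne : ∃ Q : Finset V, Uᶜ ⊂ Q ∧ Q ≠ Finset.univ ∧ cutVal G c Q ≤ cutVal G c U)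
    (S : Finset V) (hSU : S ⊆ U)
    (htrans : ∀ Q : Finset V, Uᶜ ⊂ Q → Q ≠ Finset.univ → cutVal G c Q ≤ cutVal G c U →
      (S ∩ Q).Nonempty)
    (hminimal : ∀ S' : Finset V, S' ⊂ S →
      ∃ Q : Finset V, Uᶜ ⊂ Q ∧ Q ≠ Finset.univ ∧ cutVal G c Q ≤ cutVal G c U ∧ S' ∩ Q = ∅)
    (u : V) (huS : u ∈ S) (A : Finset V)
    (hAmin : IsMinTerminalCut G c (S.erase u) Uᶜ Aᶜ)
    (hAsrcmin : ∀ Y : Finset V, IsMinTerminalCut G c (S.erase u) Uᶜ Y → Aᶜ ⊆ Y) :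
    cutVal G c A ≤ cutVal G c U ∧ u ∈ A := by
  classical
  obtain ⟨Q, hQ1, hQ2, hQ3, hQ4⟩ := hminimal (S.erase u) (Finset.erase_ssubset huS)
  have hQcT : IsTerminalCut (S.erase u) Uᶜ Qᶜ := by
    constructor
    · intro x hx
      rw [Finset.mem_compl]
      intro hxQ
      have : x ∈ (S.erase u) ∩ Q := Finset.mem_inter.mpr ⟨hx, hxQ⟩
      rw [hQ4] at this
      exact absurd this (Finset.notMem_empty x)
    · exact Finset.compl_subset_compl.mpr hQ1.subset
  have hAQ : cutVal G c Aᶜ ≤ cutVal G c Qᶜ := hAmin.2 Qᶜ hQcT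
  have h1 : cutVal G c A ≤ cutVal G c U := by
    calc cutVal G c A = cutVal G c Aᶜ := (cutVal_compl G c hcsymm A).symm
    _ ≤ cutVal G c Qᶜ := hAQ
    _ = cutVal G c Q := cutVal_compl G c hcsymm Q
    _ ≤ cutVal G c U := hQ3
  refine ⟨h1, ?_⟩
  by_contra huA
  have hUcA : Uᶜ ⊆ A := by
    have := hAmin.1.2
    rwa [Finset.compl_subset_compl] at this
  have hne : Uᶜ ≠ A := by
    intro heq
    have hAU : Aᶜ = U := by rw [← heq, compl_compl]
    have hUT : IsTerminalCut (S.erase u) Uᶜ U :=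
      ⟨(Finset.erase_subset u S).trans hSU, by rw [compl_compl]⟩
    have hQmin : IsMinTerminalCut G c (S.erase u) Uᶜ Qᶜ := by
      refine ⟨hQcT, fun Y hY => ?_⟩
      calc cutVal G c Qᶜ = cutVal G c Q := cutVal_compl G c hcsymm Q
      _ ≤ cutVal G c U := hQ3
      _ = cutVal G c Aᶜ := by rw [hAU]
      _ ≤ cutVal G c Y := hAmin.2 Y hY
    have hsub : Aᶜ ⊆ Qᶜ := hAsrcmin Qᶜ hQmin
    have : Q ⊆ A := by rwa [Finset.compl_subset_compl] at hsub
    have : Q ⊆ Uᶜ := by rw [heq]; exact this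
    exact (hQ1.not_subset) this
  have hssub : Uᶜ ⊂ A := lt_of_le_of_ne hUcA hne
  have hAuniv : A ≠ Finset.univ := by
    intro h
    exact huA (h ▸ Finset.mem_univ u)
  obtain ⟨x, hx⟩ := htrans A hssub hAuniv h1
  rw [Finset.mem_inter] at hx
  rcases eq_or_ne x u with rfl | hxu
  · exact huA hx.2
  · have : x ∈ Aᶜ := hAmin.1.1 (Finset.mem_erase.mpr ⟨hxu, hx.1⟩)
    rw [Finset.mem_compl] at this
    exact this hx.2
end

section
/- Let G=(V,E) be a finite graph with positive edge costs, let U be a nonempty proper subset of V, and let S ⊆ U and T ⊆ V∖U be nonempty subsets. If (U, V∖U) is the unique minimum (S, V∖U)-terminal cut of G and also the unique minimum (U, T)-terminal cut of G, then (U, V∖U) is the unique minimum (S, T)-terminal cut of G. -/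
open Finset

variable {V : Type*} [Fintype V] [DecidableEq V]

private lemma cut_eq_ind (f : V → V → ℝ) (X : Finset V) :
    ∑ u ∈ X, ∑ v ∈ Xᶜ, f u v = ∑ u : V, ∑ v : V,
      f u v * ((if u ∈ X then (1:ℝ) else 0) * (if v ∈ X then 0 else 1)) := by
  classical
  calc ∑ u ∈ X, ∑ v ∈ Xᶜ, f u v
      = ∑ u ∈ X, ∑ v : V, (if v ∈ Xᶜ then f u v else 0) := by
        refine Finset.sum_congr rfl fun u _ => ?_
        rw [Finset.sum_ite_mem, Finset.univ_inter]
    _ = ∑ u : V, (if u ∈ X then ∑ v : V, (if v ∈ Xᶜ then f u v else 0) else 0) := by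
        rw [Finset.sum_ite_mem, Finset.univ_inter]
    _ = _ := by
        refine Finset.sum_congr rfl fun u _ => ?_
        by_cases hu : u ∈ X
        · simp only [hu, if_true, one_mul]
          refine Finset.sum_congr rfl fun v _ => ?_
          by_cases hv : v ∈ X <;> simp [hv]
        · simp [hu]

private lemma cut_submod_gen (f : V → V → ℝ) (hf : ∀ u v, 0 ≤ f u v) (A B : Finset V) :
    (∑ u ∈ A ∩ B, ∑ v ∈ (A ∩ B)ᶜ, f u v) + (∑ u ∈ A ∪ B, ∑ v ∈ (A ∪ B)ᶜ, f u v)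
      ≤ (∑ u ∈ A, ∑ v ∈ Aᶜ, f u v) + (∑ u ∈ B, ∑ v ∈ Bᶜ, f u v) := by
  classical
  simp only [cut_eq_ind, ← Finset.sum_add_distrib]
  refine Finset.sum_le_sum fun u _ => Finset.sum_le_sum fun v _ => ?_
  rw [← mul_add, ← mul_add]
  refine mul_le_mul_of_nonneg_left ?_ (hf u v)
  by_cases hua : u ∈ A <;> by_cases hub : u ∈ B <;>
    by_cases hva : v ∈ A <;> by_cases hvb : v ∈ B <;>
    simp [hua, hub, hva, hvb]

private lemma cutVal_submod (G : SimpleGraph V) (c : V → V → ℝ)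
    (hc : ∀ u v, G.Adj u v → 0 < c u v) (A B : Finset V) :
    cutVal G c (A ∩ B) + cutVal G c (A ∪ B) ≤ cutVal G c A + cutVal G c B := by
  classical
  have := cut_submod_gen (fun u v => if G.Adj u v then c u v else 0)
    (fun u v => by
      by_cases h : G.Adj u v
      · simp [h, (hc u v h).le]
      · simp [h]) A B
  simpa [cutVal] using this

/-- If (U, Uᶜ) is the unique minimum (S, Uᶜ)-terminal cut and the unique minimum
(U, T)-terminal cut, then it is the unique minimum (S, T)-terminal cut. -/
theorem unique_min_terminal_cut_combine
    (G : SimpleGraph V)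
    (c : V → V → ℝ) (hc : ∀ u v, G.Adj u v → 0 < c u v) (hcsymm : ∀ u v, c u v = c v u)
    (U : Finset V) (hUne : U.Nonempty) (hUp : U ≠ Finset.univ)
    (S T : Finset V) (hSU : S ⊆ U) (hSne : S.Nonempty) (hTU : T ⊆ Uᶜ) (hTne : T.Nonempty)
    (hS : IsUniqueMinTerminalCut G c S Uᶜ U)
    (hT : IsUniqueMinTerminalCut G c U T U) :
    IsUniqueMinTerminalCut G c S T U := by
  classical
  obtain ⟨⟨_, hSmin⟩, hSuniq⟩ := hS
  obtain ⟨⟨_, hTmin⟩, hTuniq⟩ := hT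
  have hUT : U ⊆ Tᶜ := Finset.subset_compl_comm.mp hTU
  have hUcut : IsTerminalCut S T U := ⟨hSU, hUT⟩
  -- auxiliary facts for an arbitrary (S,T)-terminal cut Y
  have key : ∀ Y : Finset V, IsTerminalCut S T Y →
      cutVal G c U ≤ cutVal G c (Y ∩ U) ∧ cutVal G c U ≤ cutVal G c (Y ∪ U) ∧
      cutVal G c (Y ∩ U) + cutVal G c (Y ∪ U) ≤ cutVal G c Y + cutVal G c U := by
    intro Y hY
    have hint : IsTerminalCut S Uᶜ (Y ∩ U) := by
      refine ⟨Finset.subset_inter hY.1 hSU, ?_⟩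
      rw [compl_compl]
      exact Finset.inter_subset_right
    have hun : IsTerminalCut U T (Y ∪ U) :=
      ⟨Finset.subset_union_right, Finset.union_subset hY.2 hUT⟩
    exact ⟨hSmin _ hint, hTmin _ hun, cutVal_submod G c hc Y U⟩
  have hmin : IsMinTerminalCut G c S T U := by
    refine ⟨hUcut, fun Y hY => ?_⟩
    obtain ⟨h1, h2, h3⟩ := key Y hY
    linarith
  refine ⟨hmin, fun Y hYmin => ?_⟩
  obtain ⟨hY, hYle⟩ := hYmin
  have heq : cutVal G c Y = cutVal G c U :=
    le_antisymm (hYle U hUcut) (hmin.2 Y hY)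
  obtain ⟨h1, h2, h3⟩ := key Y hY
  have hintmin : IsMinTerminalCut G c S Uᶜ (Y ∩ U) := by
    refine ⟨⟨Finset.subset_inter hY.1 hSU, by rw [compl_compl]; exact Finset.inter_subset_right⟩,
      fun Z hZ => ?_⟩
    have := hSmin Z hZ
    linarith
  have hunmin : IsMinTerminalCut G c U T (Y ∪ U) := by
    refine ⟨⟨Finset.subset_union_right, Finset.union_subset hY.2 hUT⟩, fun Z hZ => ?_⟩
    have := hTmin Z hZ
    linarith
  have e1 : Y ∩ U = U := hSuniq _ hintmin
  have e2 : Y ∪ U = U := hTuniq _ hunmin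
  exact le_antisymm (e2 ▸ Finset.subset_union_left) (e1 ▸ Finset.inter_subset_left)
end

section
/- Let G=(V,E) be a finite graph with positive edge costs, let α ≥ 1, let U be a nonempty proper subset of V, let 𝒞 := {Q ⊊ V : V∖U ⊊ Q and d(Q) ≤ d(U)}, and let S = {u_1,…,u_p} ⊆ U be a minimal transversal of 𝒞 with p ≥ 3 distinct elements. For each i ∈ [p−1], let (V∖A_i, A_i) be the source-minimal minimum (S∖{u_i}, V∖U)-terminal cut, and suppose that d(A_i) ≤ d(U) and u_i ∈ A_i∖(∪_{j∈[p−1], j≠i} A_j) for every i ∈ [p−1]. Then there exists an index i ∈ [p−1] and a nonempty proper subset Y_i ⊆ V with d(Y_i) ≤ 2·d(U)/(p−1). -/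
open Finset

variable {V : Type*} [Fintype V] [DecidableEq V]

private noncomputable def dCut (w : V → V → ℝ) (X : Finset V) : ℝ := ∑ x ∈ X, ∑ y ∈ Xᶜ, w x y

private lemma dCut_nonneg {w : V → V → ℝ} (hw : ∀ x y, 0 ≤ w x y) (X : Finset V) : 0 ≤ dCut w X :=
  Finset.sum_nonneg fun _ _ => Finset.sum_nonneg fun _ _ => hw _ _

private lemma dCut_compl {w : V → V → ℝ} (hs : ∀ x y, w x y = w y x) (X : Finset V) :
    dCut w Xᶜ = dCut w X := by
  unfold dCut
  rw [compl_compl, Finset.sum_comm]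
  exact Finset.sum_congr rfl fun x _ => Finset.sum_congr rfl fun y _ => hs y x

private lemma sdCut_eq {w : V → V → ℝ} (hs : ∀ x y, w x y = w y x) (X : Finset V) :
    ∑ x : V, ∑ y : V, (if (x ∈ X ∧ y ∉ X) ∨ (x ∉ X ∧ y ∈ X) then w x y else 0)
      = 2 * dCut w X := by
  rw [← Finset.sum_add_sum_compl X
    (fun x => ∑ y : V, (if (x ∈ X ∧ y ∉ X) ∨ (x ∉ X ∧ y ∈ X) then w x y else 0))]
  have hA : ∀ x ∈ X, (∑ y : V, (if (x ∈ X ∧ y ∉ X) ∨ (x ∉ X ∧ y ∈ X) then w x y else 0))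
      = ∑ y ∈ Xᶜ, w x y := by
    intro x hx
    rw [show (∑ y : V, (if (x ∈ X ∧ y ∉ X) ∨ (x ∉ X ∧ y ∈ X) then w x y else 0))
        = ∑ y : V, (if y ∈ Xᶜ then w x y else 0) from
      Finset.sum_congr rfl fun y _ => by by_cases hy : y ∈ X <;> simp [hx, hy]]
    rw [Finset.sum_ite_mem, Finset.univ_inter]
  have hB : ∀ x ∈ Xᶜ, (∑ y : V, (if (x ∈ X ∧ y ∉ X) ∨ (x ∉ X ∧ y ∈ X) then w x y else 0))
      = ∑ y ∈ X, w x y := by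
    intro x hx
    rw [Finset.mem_compl] at hx
    rw [show (∑ y : V, (if (x ∈ X ∧ y ∉ X) ∨ (x ∉ X ∧ y ∈ X) then w x y else 0))
        = ∑ y : V, (if y ∈ X then w x y else 0) from
      Finset.sum_congr rfl fun y _ => by by_cases hy : y ∈ X <;> simp [hx, hy]]
    rw [Finset.sum_ite_mem, Finset.univ_inter]
  rw [Finset.sum_congr rfl hA, Finset.sum_congr rfl hB]
  have h2 : ∑ x ∈ Xᶜ, ∑ y ∈ X, w x y = dCut w X := by
    rw [← dCut_compl hs X]; unfold dCut; rw [compl_compl]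
  rw [h2]
  unfold dCut; ring

private lemma sum_sum_comm {α : Type*} (I : Finset α) (F : α → V → V → ℝ) :
    ∑ i ∈ I, ∑ x : V, ∑ y : V, F i x y = ∑ x : V, ∑ y : V, ∑ i ∈ I, F i x y := by
  rw [Finset.sum_comm]
  exact Finset.sum_congr rfl fun x _ => Finset.sum_comm

private lemma sum_singleton_ind {ι : Type*} [Fintype ι] [DecidableEq ι] (s : Finset ι) :
    (∑ i : ι, if s = {i} then (1:ℕ) else 0) = if s.card = 1 then 1 else 0 := by
  by_cases h : s.card = 1
  · obtain ⟨a, rfl⟩ := Finset.card_eq_one.mp h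
    rw [if_pos (Finset.card_singleton a)]
    rw [show (∑ i : ι, if ({a} : Finset ι) = {i} then (1:ℕ) else 0)
        = ∑ i : ι, if a = i then (1:ℕ) else 0 from
      Finset.sum_congr rfl fun i _ => by simp [Finset.singleton_inj]]
    simp
  · rw [if_neg h, Finset.sum_eq_zero]
    intro i _
    rw [if_neg]
    intro hsi; exact h (by rw [hsi, Finset.card_singleton])

private lemma count_core {ι : Type*} [Fintype ι] [DecidableEq ι] (s t : Finset ι)
    (R : Finset ℕ) (hR : ∀ r ∈ R, 3 ≤ r) :
    ((∑ i : ι, if (s = {i} ∧ ¬ t = {i}) ∨ (¬ s = {i} ∧ t = {i}) then (1:ℕ) else 0) +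
      ∑ r ∈ R, if (r ≤ s.card ∧ ¬ r ≤ t.card) ∨ (¬ r ≤ s.card ∧ r ≤ t.card) then (1:ℕ) else 0) ≤
      ∑ i : ι, if (i ∈ s ∧ i ∉ t) ∨ (i ∉ s ∧ i ∈ t) then (1:ℕ) else 0 := by
  rcases eq_or_ne s t with rfl | hst
  · have e : ∀ P : Prop, ((P ∧ ¬P) ∨ (¬P ∧ P)) ↔ False := by tauto
    simp only [e, if_false, Finset.sum_const_zero, Nat.zero_add, Finset.sum_boole]
    exact le_refl 0
  · have h3 : (∑ i : ι, if (i ∈ s ∧ i ∉ t) ∨ (i ∉ s ∧ i ∈ t) then (1:ℕ) else 0)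
        = (s \ t).card + (t \ s).card := by
      rw [show (∑ i : ι, if (i ∈ s ∧ i ∉ t) ∨ (i ∉ s ∧ i ∈ t) then (1:ℕ) else 0)
          = ∑ i : ι, ((if i ∈ s \ t then (1:ℕ) else 0) + (if i ∈ t \ s then (1:ℕ) else 0)) from
        Finset.sum_congr rfl fun i _ => by
          by_cases h1 : i ∈ s <;> by_cases h2 : i ∈ t <;> simp [h1, h2]]
      rw [Finset.sum_add_distrib]
      congr 1 <;>
        rw [Finset.sum_ite_mem, Finset.univ_inter, Finset.sum_const, smul_eq_mul, mul_one]
    have h1 : (∑ i : ι, if (s = {i} ∧ ¬ t = {i}) ∨ (¬ s = {i} ∧ t = {i}) then (1:ℕ) else 0)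
        ≤ (if s.card = 1 then 1 else 0) + (if t.card = 1 then 1 else 0) := by
      rw [← sum_singleton_ind s, ← sum_singleton_ind t, ← Finset.sum_add_distrib]
      refine Finset.sum_le_sum fun i _ => ?_
      by_cases h1 : s = {i} <;> by_cases h2 : t = {i} <;> simp [h1, h2]
    have h2 : (∑ r ∈ R, if (r ≤ s.card ∧ ¬ r ≤ t.card) ∨ (¬ r ≤ s.card ∧ r ≤ t.card)
          then (1:ℕ) else 0)
        ≤ (s.card - max t.card 2) + (t.card - max s.card 2) := by
      rw [← Finset.card_filter]
      calc (R.filter fun r => (r ≤ s.card ∧ ¬ r ≤ t.card) ∨ (¬ r ≤ s.card ∧ r ≤ t.card)).card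
          ≤ ((Finset.Ioc (max t.card 2) s.card) ∪ (Finset.Ioc (max s.card 2) t.card)).card := by
            apply Finset.card_le_card
            intro r hr
            rw [Finset.mem_filter] at hr
            obtain ⟨hrR, hcase⟩ := hr
            have h3r := hR r hrR
            rcases hcase with ⟨hra, hrb⟩ | ⟨hra, hrb⟩
            · exact Finset.mem_union_left _ (Finset.mem_Ioc.mpr
                ⟨max_lt (by omega) (by omega), hra⟩)
            · exact Finset.mem_union_right _ (Finset.mem_Ioc.mpr
                ⟨max_lt (by omega) (by omega), hrb⟩)
        _ ≤ (Finset.Ioc (max t.card 2) s.card).card + (Finset.Ioc (max s.card 2) t.card).card :=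
            Finset.card_union_le _ _
        _ = (s.card - max t.card 2) + (t.card - max s.card 2) := by
            rw [Nat.card_Ioc, Nat.card_Ioc]
    have h4 : (s \ t).card + (s ∩ t).card = s.card := Finset.card_sdiff_add_card_inter s t
    have h5 : (t \ s).card + (t ∩ s).card = t.card := Finset.card_sdiff_add_card_inter t s
    have h6 : (s ∩ t).card = (t ∩ s).card := by rw [Finset.inter_comm]
    have h7 : 1 ≤ (s \ t).card + (t \ s).card := by
      by_contra hcon
      push_neg at hcon
      have e1 : s \ t = ∅ := Finset.card_eq_zero.mp (by omega)
      have e2 : t \ s = ∅ := Finset.card_eq_zero.mp (by omega)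
      exact hst (Finset.Subset.antisymm (Finset.sdiff_eq_empty_iff_subset.mp e1)
        (Finset.sdiff_eq_empty_iff_subset.mp e2))
    rw [h3]
    have hms1 := le_max_left s.card 2
    have hms2 := le_max_right s.card 2
    have hmt1 := le_max_left t.card 2
    have hmt2 := le_max_right t.card 2
    rcases max_choice s.card 2 with hM1 | hM1 <;> rcases max_choice t.card 2 with hM2 | hM2 <;>
      rw [hM1, hM2] at h2 <;> rw [hM1] at hms1 hms2 <;> rw [hM2] at hmt1 hmt2 <;>
      by_cases hs1 : s.card = 1 <;> by_cases ht1 : t.card = 1 <;>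
      simp only [hs1, ht1, if_pos, if_neg, if_true, if_false] at h1 <;>
      omega

private lemma cast_boole_sum {α : Type*} (s : Finset α) (P : α → Prop) [DecidablePred P] :
    ((∑ a ∈ s, if P a then (1:ℕ) else 0 : ℕ) : ℝ) = ∑ a ∈ s, if P a then (1:ℝ) else 0 := by
  push_cast
  rfl

/-- If S = {u₁,…,u_p} ⊆ U is a minimal transversal of 𝒞 = {Q ⊊ V : Uᶜ ⊊ Q, d(Q) ≤ d(U)}
with p ≥ 3, and for each i ∈ [p−1] the source-minimal minimum (S∖{uᵢ}, Uᶜ)-terminal cut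
(Aᵢᶜ, Aᵢ) satisfies d(Aᵢ) ≤ d(U) and uᵢ ∈ Aᵢ ∖ (∪_{j≠i} Aⱼ), then some index i ∈ [p−1]
admits a nonempty proper subset Yᵢ with d(Yᵢ) ≤ 2 d(U)/(p−1). -/
theorem uncrossing_gives_cheap_cut
    (G : SimpleGraph V)
    (c : V → V → ℝ) (hc : ∀ u v, G.Adj u v → 0 < c u v) (hcsymm : ∀ u v, c u v = c v u)
    (α : ℝ) (hα : 1 ≤ α)
    (U : Finset V) (hUne : U.Nonempty) (hUp : U ≠ Finset.univ)
    (p : ℕ) (hp : 3 ≤ p) (u : Fin p → V) (hu : Function.Injective u)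
    (hSU : Finset.image u Finset.univ ⊆ U)
    (htrans : ∀ Q : Finset V, Uᶜ ⊂ Q → Q ≠ Finset.univ → cutVal G c Q ≤ cutVal G c U →
      (Finset.image u Finset.univ ∩ Q).Nonempty)
    (hminimal : ∀ S' : Finset V, S' ⊂ Finset.image u Finset.univ →
      ∃ Q : Finset V, Uᶜ ⊂ Q ∧ Q ≠ Finset.univ ∧ cutVal G c Q ≤ cutVal G c U ∧ S' ∩ Q = ∅)
    (A : Fin (p - 1) → Finset V)
    (hAmin : ∀ i : Fin (p - 1), IsMinTerminalCut G c
      ((Finset.image u Finset.univ).erase (u (Fin.castLE (Nat.sub_le p 1) i))) Uᶜ (A i)ᶜ)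
    (hAsrcmin : ∀ i : Fin (p - 1), ∀ Y : Finset V,
      IsMinTerminalCut G c
        ((Finset.image u Finset.univ).erase (u (Fin.castLE (Nat.sub_le p 1) i))) Uᶜ Y →
      (A i)ᶜ ⊆ Y)
    (hAd : ∀ i : Fin (p - 1), cutVal G c (A i) ≤ cutVal G c U)
    (hui : ∀ i : Fin (p - 1), u (Fin.castLE (Nat.sub_le p 1) i) ∈ A i ∧
      ∀ j : Fin (p - 1), j ≠ i → u (Fin.castLE (Nat.sub_le p 1) i) ∉ A j) :
    ∃ i : Fin (p - 1), ∃ Yi : Finset V, Yi.Nonempty ∧ Yi ≠ Finset.univ ∧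
      cutVal G c Yi ≤ 2 * cutVal G c U / ((p - 1 : ℕ) : ℝ) := by
  classical
  set w : V → V → ℝ := fun x y => if G.Adj x y then c x y else 0 with hwdef
  have hwsymm : ∀ x y, w x y = w y x := by
    intro x y
    by_cases h : G.Adj x y
    · simp only [hwdef, if_pos h, if_pos h.symm]
      exact hcsymm x y
    · have h' : ¬ G.Adj y x := fun hyx => h hyx.symm
      simp only [hwdef, if_neg h, if_neg h']
  have hwnn : ∀ x y, 0 ≤ w x y := by
    intro x y
    by_cases h : G.Adj x y
    · simp only [hwdef, if_pos h]; exact (hc x y h).le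
    · simp only [hwdef, if_neg h]
      exact le_refl 0
  have hcut : ∀ X : Finset V, cutVal G c X = dCut w X := fun X => rfl
  have hk2 : 2 ≤ p - 1 := by omega
  have huS : ∀ m : Fin p, u m ∈ Finset.image u Finset.univ :=
    fun m => Finset.mem_image_of_mem u (Finset.mem_univ m)
  have hUcA : ∀ i, Uᶜ ⊆ A i := by
    intro i v hv
    by_contra hva
    have h1 : v ∈ (A i)ᶜ := Finset.mem_compl.mpr hva
    have h2 := (hAmin i).1.2 h1
    rw [compl_compl] at h2
    exact (Finset.mem_compl.mp hv) h2
  have hSA : ∀ (m : Fin p) (i : Fin (p-1)), m ≠ Fin.castLE (Nat.sub_le p 1) i → u m ∉ A i := by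
    intro m i hmi hin
    have hne : u m ≠ u (Fin.castLE (Nat.sub_le p 1) i) := fun h => hmi (hu h)
    have hmem : u m ∈ (Finset.image u Finset.univ).erase (u (Fin.castLE (Nat.sub_le p 1) i)) :=
      Finset.mem_erase.mpr ⟨hne, huS m⟩
    have h1 := (hAmin i).1.1 hmem
    exact (Finset.mem_compl.mp h1) hin
  set J : V → Finset (Fin (p-1)) := fun v => Finset.univ.filter (fun i => v ∈ A i) with hJdef
  have hJ : ∀ v i, i ∈ J v ↔ v ∈ A i := by
    intro v i; simp [hJdef]
  set Y : Fin (p-1) → Finset V := fun i => Finset.univ.filter (fun v => J v = {i}) with hYdef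
  have hYmem : ∀ (v : V) (i : Fin (p-1)), v ∈ Y i ↔ J v = {i} := by
    intro v i; simp [hYdef]
  set Q : ℕ → Finset V := fun r => Finset.univ.filter (fun v => r ≤ (J v).card) with hQdef
  have hQmem : ∀ (v : V) (r : ℕ), v ∈ Q r ↔ r ≤ (J v).card := by
    intro v r; simp [hQdef]
  have hAmemIff : ∀ (v : V) (i : Fin (p-1)), v ∈ A i ↔ i ∈ J v := fun v i => (hJ v i).symm
  have hJUc : ∀ v ∈ Uᶜ, J v = Finset.univ := by
    intro v hv
    ext i
    simp only [Finset.mem_univ, iff_true, hJ]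
    exact hUcA i hv
  have hJS : ∀ m : Fin p, (J (u m)).card ≤ 1 := by
    intro m
    refine Finset.card_le_one.mpr ?_
    intro a ha b hb
    have ha' : u m ∈ A a := (hJ _ _).mp ha
    have hb' : u m ∈ A b := (hJ _ _).mp hb
    have hma : m = Fin.castLE (Nat.sub_le p 1) a := by
      by_contra hcon; exact hSA m a hcon ha'
    have hmb : m = Fin.castLE (Nat.sub_le p 1) b := by
      by_contra hcon; exact hSA m b hcon hb'
    exact Fin.castLE_injective _ (hma ▸ hmb)
  have hUcQ : ∀ r ∈ Finset.Icc 3 (p-1), Uᶜ ⊆ Q r := by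
    intro r hr v hv
    rw [hQmem, hJUc v hv, Finset.card_univ, Fintype.card_fin]
    exact (Finset.mem_Icc.mp hr).2
  have hQd : ∀ r ∈ Finset.Icc 3 (p-1), dCut w U ≤ dCut w (Q r) := by
    intro r hr
    have hr3 : 3 ≤ r := (Finset.mem_Icc.mp hr).1
    have hSQ : ∀ m : Fin p, u m ∉ Q r := by
      intro m hm
      have h1 := (hQmem _ _).mp hm
      have h2 := hJS m
      omega
    rcases (hUcQ r hr).ssubset_or_eq with hss | heq
    · have hQuniv : Q r ≠ Finset.univ := by
        intro hQu
        exact hSQ ⟨0, by omega⟩ (hQu ▸ Finset.mem_univ _)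
      by_contra hcon
      push_neg at hcon
      have hle : cutVal G c (Q r) ≤ cutVal G c U := by
        rw [hcut, hcut]; exact hcon.le
      obtain ⟨x, hx⟩ := htrans (Q r) hss hQuniv hle
      rw [Finset.mem_inter] at hx
      obtain ⟨hxS, hxQ⟩ := hx
      obtain ⟨m, -, rfl⟩ := Finset.mem_image.mp hxS
      exact hSQ m hxQ
    · rw [← heq, dCut_compl hwsymm]
  have master : (∑ i : Fin (p-1), 2 * dCut w (Y i))
      + (∑ r ∈ Finset.Icc 3 (p-1), 2 * dCut w (Q r))
      ≤ ∑ i : Fin (p-1), 2 * dCut w (A i) := by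
    have e1 : ∀ X : Finset V, 2 * dCut w X
        = ∑ x : V, ∑ y : V, (if (x ∈ X ∧ y ∉ X) ∨ (x ∉ X ∧ y ∈ X) then w x y else 0) :=
      fun X => (sdCut_eq hwsymm X).symm
    simp only [e1]
    rw [sum_sum_comm, sum_sum_comm, sum_sum_comm, ← Finset.sum_add_distrib]
    refine Finset.sum_le_sum fun x _ => ?_
    rw [← Finset.sum_add_distrib]
    refine Finset.sum_le_sum fun y _ => ?_
    have t1 : ∑ i : Fin (p-1), (if (x ∈ Y i ∧ y ∉ Y i) ∨ (x ∉ Y i ∧ y ∈ Y i) then w x y else 0)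
        = (∑ i : Fin (p-1), if (x ∈ Y i ∧ y ∉ Y i) ∨ (x ∉ Y i ∧ y ∈ Y i) then (1:ℝ) else 0)
          * w x y := by
      rw [Finset.sum_mul]
      exact Finset.sum_congr rfl fun i _ => by split_ifs <;> simp
    have t2 : ∑ r ∈ Finset.Icc 3 (p-1),
          (if (x ∈ Q r ∧ y ∉ Q r) ∨ (x ∉ Q r ∧ y ∈ Q r) then w x y else 0)
        = (∑ r ∈ Finset.Icc 3 (p-1),
            if (x ∈ Q r ∧ y ∉ Q r) ∨ (x ∉ Q r ∧ y ∈ Q r) then (1:ℝ) else 0) * w x y := by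
      rw [Finset.sum_mul]
      exact Finset.sum_congr rfl fun r _ => by split_ifs <;> simp
    have t3 : ∑ i : Fin (p-1), (if (x ∈ A i ∧ y ∉ A i) ∨ (x ∉ A i ∧ y ∈ A i) then w x y else 0)
        = (∑ i : Fin (p-1), if (x ∈ A i ∧ y ∉ A i) ∨ (x ∉ A i ∧ y ∈ A i) then (1:ℝ) else 0)
          * w x y := by
      rw [Finset.sum_mul]
      exact Finset.sum_congr rfl fun i _ => by split_ifs <;> simp
    rw [t1, t2, t3, ← add_mul]
    refine mul_le_mul_of_nonneg_right ?_ (hwnn x y)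
    simp only [hYmem, hQmem, hAmemIff]
    rw [← cast_boole_sum, ← cast_boole_sum, ← cast_boole_sum, ← Nat.cast_add]
    exact Nat.cast_le.mpr (count_core (J x) (J y) (Finset.Icc 3 (p-1))
      (fun r hr => (Finset.mem_Icc.mp hr).1))
  have sumA : ∑ i : Fin (p-1), dCut w (A i) ≤ ((p-1 : ℕ) : ℝ) * dCut w U := by
    calc ∑ i : Fin (p-1), dCut w (A i) ≤ ∑ _i : Fin (p-1), dCut w U :=
          Finset.sum_le_sum fun i _ => by rw [← hcut, ← hcut]; exact hAd i
      _ = ((p-1 : ℕ) : ℝ) * dCut w U := by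
          rw [Finset.sum_const, Finset.card_univ, Fintype.card_fin, nsmul_eq_mul]
  have sumQ : (((p-1 : ℕ) : ℝ) - 2) * dCut w U
      ≤ ∑ r ∈ Finset.Icc 3 (p-1), dCut w (Q r) := by
    have h1 : ∑ r ∈ Finset.Icc 3 (p-1), dCut w U
        ≤ ∑ r ∈ Finset.Icc 3 (p-1), dCut w (Q r) :=
      Finset.sum_le_sum fun r hr => hQd r hr
    have h2 : (((p-1 : ℕ) : ℝ) - 2) * dCut w U = ∑ _r ∈ Finset.Icc 3 (p-1), dCut w U := by
      rw [Finset.sum_const, nsmul_eq_mul, Nat.card_Icc]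
      congr 1
      rw [Nat.cast_sub (by omega : 3 ≤ p - 1 + 1)]
      push_cast
      ring
    rw [h2]
    exact h1
  have sumY : ∑ i : Fin (p-1), dCut w (Y i) ≤ 2 * dCut w U := by
    have hm2 : 2 * (∑ i : Fin (p-1), dCut w (Y i))
        + 2 * (∑ r ∈ Finset.Icc 3 (p-1), dCut w (Q r))
        ≤ 2 * ∑ i : Fin (p-1), dCut w (A i) := by
      rw [Finset.mul_sum, Finset.mul_sum, Finset.mul_sum]
      exact master
    have hcast : (2:ℝ) ≤ ((p-1:ℕ):ℝ) := by exact_mod_cast hk2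
    nlinarith [dCut_nonneg hwnn U]
  have hne : (Finset.univ : Finset (Fin (p-1))).Nonempty := ⟨⟨0, by omega⟩, Finset.mem_univ _⟩
  obtain ⟨i0, -, hmin⟩ := Finset.exists_min_image Finset.univ (fun i => dCut w (Y i)) hne
  have hkY : ((p-1:ℕ):ℝ) * dCut w (Y i0) ≤ ∑ i : Fin (p-1), dCut w (Y i) := by
    calc ((p-1:ℕ):ℝ) * dCut w (Y i0) = ∑ _i : Fin (p-1), dCut w (Y i0) := by
          rw [Finset.sum_const, Finset.card_univ, Fintype.card_fin, nsmul_eq_mul]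
      _ ≤ ∑ i : Fin (p-1), dCut w (Y i) :=
          Finset.sum_le_sum fun j _ => hmin j (Finset.mem_univ j)
  refine ⟨i0, Y i0, ?_, ?_, ?_⟩
  · refine ⟨u (Fin.castLE (Nat.sub_le p 1) i0), ?_⟩
    rw [hYmem]
    ext j
    simp only [Finset.mem_singleton, hJ]
    constructor
    · intro hj
      by_contra hne'
      exact (hui i0).2 j hne' hj
    · intro hj
      rw [hj]
      exact (hui i0).1
  · intro hYu
    have hex : ∃ v, v ∉ U := by
      by_contra hcon
      push_neg at hcon
      exact hUp (Finset.eq_univ_iff_forall.mpr hcon)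
    obtain ⟨v, hv0⟩ := hex
    have hv : v ∈ Uᶜ := Finset.mem_compl.mpr hv0
    have hvY : v ∈ Y i0 := hYu ▸ Finset.mem_univ v
    have h1 := (hYmem v i0).mp hvY
    rw [hJUc v hv] at h1
    have hcard := congrArg Finset.card h1
    rw [Finset.card_univ, Fintype.card_fin, Finset.card_singleton] at hcard
    omega
  · rw [hcut, hcut]
    have hkpos : (0:ℝ) < ((p-1:ℕ):ℝ) := by exact_mod_cast (by omega : 0 < p - 1)
    rw [le_div_iff₀ hkpos]
    nlinarith [hkY, sumY]
end
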